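/- arXiv:1109.6485 — 7 statements merged into one kernel-verified Lean document; each statement's English description precedes it below -/
import Mathlib

section
/- (Lemma 3.1.) Let 1 ≤ p < ∞, 0 ≤ λ ≤ 1, and let w : ℝ → [0,∞) be a measurable weight such that ‖χ_I‖_{p,λ;w} < ∞ for every bounded open interval I. Suppose k > 0 is such that for every bounded open interval I = (a,b) the function h_I(x) = (1/π)·|log( |x − b| / |x − a| )| (which equals |Sχ_I(x)| for a.e. x, S being the Hilbert transform) satisfies ‖h_I‖_{p,λ;w} ≤ k·‖χ_I‖_{p,λ;w}. Then for every pair of adjacent intervals of equal length I′ = (a,b) and I″ = (b, 2b − a) one has ((log 2)/(π k))·‖χ_{I′}‖_{p,λ;w} ≤ ‖χ_{I″}‖_{p,λ;w} ≤ ((π k)/(log 2))·‖χ_{I′}‖_{p,λ;w}. -/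
open MeasureTheory Set

/-- The weighted Morrey norm on `ℝ`: supremum over all bounded open intervals `(a,b)` of
`( (b-a)^{-λ} ∫_{(a,b)} |f|^p w )^{1/p}`, with values in `[0,∞]`. -/
noncomputable def morreyNormI (p lam : ℝ) (w f : ℝ → ℝ) : ENNReal :=
  ⨆ (a : ℝ) (b : ℝ) (_ : a < b),
    (ENNReal.ofReal ((b - a) ^ (-lam)) *
      ∫⁻ y in Set.Ioo a b, ENNReal.ofReal (|f y| ^ p * w y)) ^ (1 / p)

lemma morrey_key (p lam : ℝ) (hp : 1 ≤ p) (w : ℝ → ℝ) (hw0 : ∀ x, 0 ≤ w x)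
    (c : ℝ) (hc : 0 ≤ c) (f g : ℝ → ℝ) (h : ∀ x, c * |f x| ≤ |g x|) :
    ENNReal.ofReal c * morreyNormI p lam w f ≤ morreyNormI p lam w g := by
  have hp0 : (0:ℝ) < p := lt_of_lt_of_le one_pos hp
  unfold morreyNormI
  simp_rw [ENNReal.mul_iSup]
  refine iSup_le fun a => iSup_le fun b => iSup_le fun hab => ?_
  refine le_trans ?_ (le_iSup_of_le a (le_iSup_of_le b (le_iSup_of_le hab le_rfl)))
  have hcp : ENNReal.ofReal c = (ENNReal.ofReal (c ^ p)) ^ (1/p) := by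
    rw [ENNReal.ofReal_rpow_of_nonneg (by positivity) (by positivity),
      ← Real.rpow_mul hc, mul_one_div_cancel hp0.ne', Real.rpow_one]
  rw [hcp, ← ENNReal.mul_rpow_of_nonneg _ _ (by positivity)]
  refine ENNReal.rpow_le_rpow ?_ (by positivity)
  rw [mul_left_comm]
  refine mul_le_mul_right ?_ _
  rw [← lintegral_const_mul' _ _ ENNReal.ofReal_ne_top]
  refine lintegral_mono fun y => ?_
  rw [← ENNReal.ofReal_mul (by positivity)]
  refine ENNReal.ofReal_le_ofReal ?_
  rw [← mul_assoc, ← Real.mul_rpow hc (abs_nonneg _)]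
  exact mul_le_mul_of_nonneg_right
    (Real.rpow_le_rpow (by positivity) (h y) hp0.le) (hw0 y)

/-- Lemma 3.1: if the a.e. modulus `h_I(x) = (1/π)|log(|x-b|/|x-a|)|` of the Hilbert
transform of `χ_I` satisfies `‖h_I‖_{p,λ;w} ≤ k ‖χ_I‖_{p,λ;w}` for every bounded open
interval `I`, then the weighted Morrey norms of characteristic functions of adjacent
intervals of equal length are comparable. -/
theorem stmt2 (p lam : ℝ) (hp : 1 ≤ p) (hlam0 : 0 ≤ lam) (hlam1 : lam ≤ 1)
    (w : ℝ → ℝ) (hw : Measurable w) (hw0 : ∀ x, 0 ≤ w x)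
    (hfin : ∀ a b : ℝ, a < b →
      morreyNormI p lam w ((Set.Ioo a b).indicator 1) < ⊤)
    (k : ℝ) (hk : 0 < k)
    (hbound : ∀ a b : ℝ, a < b →
      morreyNormI p lam w (fun x => (1 / Real.pi) * |Real.log (|x - b| / |x - a|)|) ≤
        ENNReal.ofReal k * morreyNormI p lam w ((Set.Ioo a b).indicator 1)) :
    ∀ a b : ℝ, a < b →
      ENNReal.ofReal (Real.log 2 / (Real.pi * k)) *
          morreyNormI p lam w ((Set.Ioo a b).indicator 1) ≤
        morreyNormI p lam w ((Set.Ioo b (2 * b - a)).indicator 1) ∧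
      morreyNormI p lam w ((Set.Ioo b (2 * b - a)).indicator 1) ≤
        ENNReal.ofReal (Real.pi * k / Real.log 2) *
          morreyNormI p lam w ((Set.Ioo a b).indicator 1) := by
  intro a b hab
  have hpi : (0:ℝ) < Real.pi := Real.pi_pos
  have hlog2 : (0:ℝ) < Real.log 2 := Real.log_pos one_lt_two
  set c : ℝ := Real.log 2 / Real.pi with hc_def
  have hc : 0 < c := by positivity
  set N1 := morreyNormI p lam w ((Set.Ioo a b).indicator 1) with hN1
  set N2 := morreyNormI p lam w ((Set.Ioo b (2*b-a)).indicator 1) with hN2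
  -- pointwise estimate on I'' for h_{I'}
  have hpt2 : ∀ x : ℝ, c * |((Set.Ioo b (2*b-a)).indicator 1 : ℝ → ℝ) x| ≤
      abs ((1 / Real.pi) * |Real.log (|x - b| / |x - a|)|) := by
    intro x
    by_cases hx : x ∈ Set.Ioo b (2*b-a)
    · rw [Set.indicator_of_mem hx, Pi.one_apply, abs_one, mul_one,
        abs_of_nonneg (by positivity)]
      obtain ⟨hx1, hx2⟩ := hx
      have hxb : (0:ℝ) < x - b := by linarith
      have hxa : (0:ℝ) < x - a := by linarith
      rw [abs_of_pos hxb, abs_of_pos hxa]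
      have hr : (0:ℝ) < (x - b) / (x - a) := by positivity
      have hle : (x - b) / (x - a) ≤ 1/2 := by
        rw [div_le_div_iff₀ hxa (by norm_num)]; linarith
      have hlog : Real.log ((x - b) / (x - a)) ≤ -Real.log 2 := by
        calc Real.log ((x - b) / (x - a)) ≤ Real.log (1/2) :=
              Real.log_le_log hr hle
          _ = -Real.log 2 := by rw [one_div, Real.log_inv]
      have h1 : Real.log 2 ≤ |Real.log ((x - b) / (x - a))| :=
        le_trans (by linarith) (neg_le_abs _)
      rw [hc_def, div_eq_mul_inv (Real.log 2), one_div, mul_comm Real.pi⁻¹]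
      exact mul_le_mul_of_nonneg_right h1 (inv_nonneg.mpr Real.pi_pos.le)
    · rw [Set.indicator_of_notMem hx, abs_zero, mul_zero]
      positivity
  -- pointwise estimate on I' for h_{I''}
  have hpt1 : ∀ x : ℝ, c * |((Set.Ioo a b).indicator 1 : ℝ → ℝ) x| ≤
      abs ((1 / Real.pi) * |Real.log (|x - (2*b-a)| / |x - b|)|) := by
    intro x
    by_cases hx : x ∈ Set.Ioo a b
    · rw [Set.indicator_of_mem hx, Pi.one_apply, abs_one, mul_one,
        abs_of_nonneg (by positivity)]
      obtain ⟨hx1, hx2⟩ := hx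
      have hxb : (0:ℝ) < b - x := by linarith
      have hxa : (0:ℝ) < (2*b-a) - x := by linarith
      rw [abs_sub_comm x (2*b-a), abs_sub_comm x b, abs_of_pos hxa, abs_of_pos hxb]
      have hge : (2:ℝ) ≤ ((2*b-a) - x) / (b - x) := by
        rw [le_div_iff₀ hxb]; linarith
      have h1 : Real.log 2 ≤ |Real.log (((2*b-a) - x) / (b - x))| :=
        le_trans (Real.log_le_log two_pos hge) (le_abs_self _)
      rw [hc_def, div_eq_mul_inv (Real.log 2), one_div, mul_comm Real.pi⁻¹]
      exact mul_le_mul_of_nonneg_right h1 (inv_nonneg.mpr Real.pi_pos.le)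
    · rw [Set.indicator_of_notMem hx, abs_zero, mul_zero]
      positivity
  have hbab : b < 2*b - a := by linarith
  have H2 : ENNReal.ofReal c * N2 ≤ ENNReal.ofReal k * N1 :=
    le_trans (morrey_key p lam hp w hw0 c hc.le _ _ hpt2) (hbound a b hab)
  have H1 : ENNReal.ofReal c * N1 ≤ ENNReal.ofReal k * N2 :=
    le_trans (morrey_key p lam hp w hw0 c hc.le _ _ hpt1) (hbound b (2*b-a) hbab)
  have hcne0 : ENNReal.ofReal c ≠ 0 := (ENNReal.ofReal_pos.mpr hc).ne'
  have hkne0 : ENNReal.ofReal k ≠ 0 := (ENNReal.ofReal_pos.mpr hk).ne'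
  constructor
  · -- first inequality
    have key : ENNReal.ofReal (Real.log 2 / (Real.pi * k)) =
        (ENNReal.ofReal k)⁻¹ * ENNReal.ofReal c := by
      have h : Real.log 2 / (Real.pi * k) = c / k := by
        rw [hc_def]; field_simp
      rw [h, ENNReal.ofReal_div_of_pos hk, div_eq_mul_inv, mul_comm]
    calc ENNReal.ofReal (Real.log 2 / (Real.pi * k)) * N1
        = (ENNReal.ofReal k)⁻¹ * (ENNReal.ofReal c * N1) := by
          rw [key, mul_assoc]
      _ ≤ (ENNReal.ofReal k)⁻¹ * (ENNReal.ofReal k * N2) :=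
          mul_le_mul_right H1 _
      _ = N2 := by
          rw [← mul_assoc, ENNReal.inv_mul_cancel hkne0 ENNReal.ofReal_ne_top,
            one_mul]
  · -- second inequality
    have key : ENNReal.ofReal (Real.pi * k / Real.log 2) =
        (ENNReal.ofReal c)⁻¹ * ENNReal.ofReal k := by
      have h : Real.pi * k / Real.log 2 = k / c := by
        rw [hc_def]; field_simp
      rw [h, ENNReal.ofReal_div_of_pos hc, div_eq_mul_inv, mul_comm]
    calc N2 = (ENNReal.ofReal c)⁻¹ * (ENNReal.ofReal c * N2) := by
          rw [← mul_assoc, ENNReal.inv_mul_cancel hcne0 ENNReal.ofReal_ne_top,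
            one_mul]
      _ ≤ (ENNReal.ofReal c)⁻¹ * (ENNReal.ofReal k * N1) :=
          mul_le_mul_right H2 _
      _ = ENNReal.ofReal (Real.pi * k / Real.log 2) * N1 := by
          rw [key, mul_assoc]
end

section
/- (Theorem 3.2, necessity of the 𝒜_{p,λ}-condition.) Let 1 ≤ p < ∞, 0 ≤ λ ≤ 1 with λ + p − 1 > 0, set β = 1/(λ + p − 1) and w_* = w^{−(1−λ)/(λ+p−1)}. Let w : ℝ → [0,∞) be measurable and (p,λ)-admissible, i.e. ‖χ_I‖_{p,λ;w} < ∞ and ‖χ_I‖_{p,λ;w_*} < ∞ for every bounded open interval I. Suppose k > 0 is such that: (i) for every bounded open interval I = (a,b), the function h_I(x) = (1/π)·|log( |x − b| / |x − a| )| satisfies ‖h_I‖_{p,λ;w} ≤ k·‖χ_I‖_{p,λ;w}; and (ii) for every pair of adjacent intervals of equal length I = (a,b) and I″ (either (b, 2b − a) or (2a − b, a)), the function G defined by G(y) = (1/π)·∫_I w(t)^{−β}/|t − y| dt for y ∈ I″ and G(y) = 0 otherwise satisfies ‖G‖_{p,λ;w} ≤ k·‖χ_I · w^{−β}‖_{p,λ;w}.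 Then for every bounded open interval I: ‖χ_I‖_{p,λ;w} · ( (1/|I|) ∫_I w(t)^{−β} dt ) ≤ (2π²/log 2)·k²·‖χ_I‖_{p,λ;w_*}. -/
open MeasureTheory Set

lemma morrey_mono (p lam : ℝ) (hp : 0 < p) (w w' f g : ℝ → ℝ)
    (h : ∀ x, |f x| ^ p * w x ≤ |g x| ^ p * w' x) :
    morreyNormI p lam w f ≤ morreyNormI p lam w' g := by
  unfold morreyNormI
  refine iSup_mono fun a => iSup_mono fun b => iSup_mono fun hab => ?_
  refine ENNReal.rpow_le_rpow ?_ (by positivity)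
  exact mul_le_mul_right (lintegral_mono fun y => ENNReal.ofReal_le_ofReal (h y)) _

lemma morrey_scale (p lam : ℝ) (hp : 0 < p) (c : ℝ) (hc : 0 ≤ c) (w f : ℝ → ℝ) :
    morreyNormI p lam w (fun x => c * f x) = ENNReal.ofReal c * morreyNormI p lam w f := by
  unfold morreyNormI
  simp_rw [ENNReal.mul_iSup]
  refine iSup_congr fun a => iSup_congr fun b => iSup_congr fun hab => ?_
  have h1 : (∫⁻ y in Set.Ioo a b, ENNReal.ofReal (|c * f y| ^ p * w y)) =
      ENNReal.ofReal (c ^ p) * ∫⁻ y in Set.Ioo a b, ENNReal.ofReal (|f y| ^ p * w y) := by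
    rw [← lintegral_const_mul' _ _ ENNReal.ofReal_ne_top]
    refine lintegral_congr fun y => ?_
    rw [← ENNReal.ofReal_mul (by positivity), abs_mul, abs_of_nonneg hc,
      Real.mul_rpow hc (abs_nonneg _), mul_assoc]
  rw [h1,
    show ENNReal.ofReal ((b - a) ^ (-lam)) * (ENNReal.ofReal (c ^ p) *
        ∫⁻ y in Set.Ioo a b, ENNReal.ofReal (|f y| ^ p * w y)) =
      ENNReal.ofReal (c ^ p) * (ENNReal.ofReal ((b - a) ^ (-lam)) *
        ∫⁻ y in Set.Ioo a b, ENNReal.ofReal (|f y| ^ p * w y)) by ring,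
    ENNReal.mul_rpow_of_nonneg _ _ (by positivity),
    ← ENNReal.ofReal_rpow_of_nonneg hc (le_of_lt hp),
    one_div, ← ENNReal.rpow_mul, mul_inv_cancel₀ hp.ne', ENNReal.rpow_one]

/-- Theorem 3.2 (necessity of the `𝒜_{p,λ}`-condition): under the stated a.e. bounds for
the Hilbert transform of `χ_I` and of `χ_I w^{-β}`, where `β = 1/(λ+p-1)`, every bounded
open interval `I` satisfies
`‖χ_I‖_{p,λ;w} · ((1/|I|) ∫_I w^{-β}) ≤ (2π²/log 2) k² ‖χ_I‖_{p,λ;w_*}` with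
`w_* = w^{-(1-λ)/(λ+p-1)}`. -/
theorem stmt3 (p lam : ℝ) (hp : 1 ≤ p) (hlam0 : 0 ≤ lam) (hlam1 : lam ≤ 1)
    (hlp : 0 < lam + p - 1)
    (w : ℝ → ℝ) (hw : Measurable w) (hw0 : ∀ x, 0 ≤ w x)
    -- `(p,λ)`-admissibility
    (hfin : ∀ a b : ℝ, a < b →
      morreyNormI p lam w ((Set.Ioo a b).indicator 1) < ⊤)
    (hfinstar : ∀ a b : ℝ, a < b →
      morreyNormI p lam (fun x => w x ^ (-(1 - lam) / (lam + p - 1)))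
        ((Set.Ioo a b).indicator 1) < ⊤)
    (k : ℝ) (hk : 0 < k)
    -- (i) bound for `|Sχ_I|`
    (hbound1 : ∀ a b : ℝ, a < b →
      morreyNormI p lam w (fun x => (1 / Real.pi) * |Real.log (|x - b| / |x - a|)|) ≤
        ENNReal.ofReal k * morreyNormI p lam w ((Set.Ioo a b).indicator 1))
    -- (ii) bound for `|S(χ_I w^{-β})|` on the adjacent intervals
    (hbound2 : ∀ a b : ℝ, a < b →
      ∀ I'' ∈ ({Set.Ioo b (2 * b - a), Set.Ioo (2 * a - b) a} : Set (Set ℝ)),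
        morreyNormI p lam w
            (I''.indicator fun y =>
              (1 / Real.pi) * ∫ t in Set.Ioo a b, w t ^ (-(1 / (lam + p - 1))) / |t - y|) ≤
          ENNReal.ofReal k *
            morreyNormI p lam w
              ((Set.Ioo a b).indicator fun t => w t ^ (-(1 / (lam + p - 1))))) :
    ∀ a b : ℝ, a < b →
      morreyNormI p lam w ((Set.Ioo a b).indicator 1) *
          ENNReal.ofReal ((1 / (b - a)) * ∫ t in Set.Ioo a b, w t ^ (-(1 / (lam + p - 1)))) ≤
        ENNReal.ofReal (2 * Real.pi ^ 2 / Real.log 2 * k ^ 2) *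
          morreyNormI p lam (fun x => w x ^ (-(1 - lam) / (lam + p - 1)))
            ((Set.Ioo a b).indicator 1) := by
  intro a b hab
  have hp0 : (0:ℝ) < p := lt_of_lt_of_le one_pos hp
  have hπ : (0:ℝ) < Real.pi := Real.pi_pos
  have hlog2 : (0:ℝ) < Real.log 2 := Real.log_pos (by norm_num)
  have hab2 : b < 2 * b - a := by linarith
  -- Step A
  have stepA : morreyNormI p lam w ((Set.Ioo a b).indicator 1) ≤
      ENNReal.ofReal (Real.pi / Real.log 2) *
        (ENNReal.ofReal k * morreyNormI p lam w ((Set.Ioo b (2*b-a)).indicator 1)) := by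
    have h1 : morreyNormI p lam w ((Set.Ioo a b).indicator 1) ≤
        morreyNormI p lam w (fun x => (Real.pi / Real.log 2) *
          ((1 / Real.pi) * |Real.log (|x - (2*b-a)| / |x - b|)|)) := by
      refine morrey_mono p lam hp0 _ _ _ _ fun x => ?_
      by_cases hx : x ∈ Set.Ioo a b
      · rw [indicator_of_mem hx]
        simp only [Pi.one_apply]
        have hbx : 0 < b - x := by linarith [hx.2]
        have hr : (2:ℝ) ≤ |x - (2*b-a)| / |x - b| := by
          rw [abs_of_neg (by linarith [hx.1] : x - (2*b-a) < 0),
            abs_of_neg (by linarith : x - b < 0), le_div_iff₀ (by linarith)]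
          linarith [hx.1]
        have hlog : Real.log 2 ≤ |Real.log (|x - (2*b-a)| / |x - b|)| :=
          le_trans (Real.log_le_log (by norm_num) hr) (le_abs_self _)
        have hbase : (1:ℝ) ≤ (Real.pi / Real.log 2) *
            ((1 / Real.pi) * |Real.log (|x - (2*b-a)| / |x - b|)|) := by
          have heq : Real.pi / Real.log 2 *
              (1 / Real.pi * |Real.log (|x - (2*b-a)| / |x - b|)|) =
              |Real.log (|x - (2*b-a)| / |x - b|)| / Real.log 2 := by
            field_simp
          rw [heq]
          exact (one_le_div hlog2).mpr hlog
        have h2 : |1| ^ p ≤ |(Real.pi / Real.log 2) *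
            ((1 / Real.pi) * |Real.log (|x - (2*b-a)| / |x - b|)|)| ^ p := by
          rw [abs_one, Real.one_rpow, abs_of_nonneg (le_trans zero_le_one hbase)]
          calc (1:ℝ) = 1 ^ p := (Real.one_rpow p).symm
            _ ≤ _ := Real.rpow_le_rpow zero_le_one hbase hp0.le
        exact mul_le_mul_of_nonneg_right h2 (hw0 x)
      · rw [indicator_of_notMem hx, abs_zero, Real.zero_rpow hp0.ne', zero_mul]
        exact mul_nonneg (Real.rpow_nonneg (abs_nonneg _) p) (hw0 x)
    rw [morrey_scale p lam hp0 _ (by positivity)] at h1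
    exact h1.trans (mul_le_mul_right (hbound1 b (2*b-a) hab2) _)
  by_cases hi : IntegrableOn (fun t => w t ^ (-(1 / (lam + p - 1)))) (Set.Ioo a b) volume
  · -- main case
    set c : ℝ := (1 / (b - a)) * ∫ t in Set.Ioo a b, w t ^ (-(1 / (lam + p - 1))) with hc
    have hint0 : (0:ℝ) ≤ ∫ t in Set.Ioo a b, w t ^ (-(1 / (lam + p - 1))) :=
      integral_nonneg fun t => Real.rpow_nonneg (hw0 t) _
    have hc0 : 0 ≤ c := mul_nonneg (one_div_nonneg.mpr (by linarith)) hint0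
    -- Step B
    have stepB : ENNReal.ofReal (c / (2 * Real.pi)) *
        morreyNormI p lam w ((Set.Ioo b (2*b-a)).indicator 1) ≤
        ENNReal.ofReal k * morreyNormI p lam w
          ((Set.Ioo a b).indicator fun t => w t ^ (-(1 / (lam + p - 1)))) := by
      have h2 : morreyNormI p lam w
          (fun y => (c / (2 * Real.pi)) * (Set.Ioo b (2*b-a)).indicator 1 y) ≤
          morreyNormI p lam w ((Set.Ioo b (2*b-a)).indicator fun y =>
            (1 / Real.pi) * ∫ t in Set.Ioo a b, w t ^ (-(1 / (lam + p - 1))) / |t - y|) := by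
        refine morrey_mono p lam hp0 _ _ _ _ fun y => ?_
        by_cases hy : y ∈ Set.Ioo b (2*b-a)
        · rw [indicator_of_mem hy, indicator_of_mem hy]
          simp only [Pi.one_apply, mul_one]
          have hyb : 0 < y - b := by linarith [hy.1]
          have hg : IntegrableOn (fun t => w t ^ (-(1 / (lam + p - 1))) / |t - y|)
              (Set.Ioo a b) volume := by
            refine Integrable.mono (hi.div_const (y - b)) ?_ ?_
            · have hm : Measurable fun t => w t ^ (-(1 / (lam + p - 1))) / |t - y| := by
                fun_prop
              exact hm.aestronglyMeasurable
            · filter_upwards [ae_restrict_mem measurableSet_Ioo] with t ht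
              have hty : 0 < |t - y| := by
                rw [abs_of_neg (by linarith [ht.2] : t - y < 0)]; linarith [ht.2]
              have hty2 : y - b ≤ |t - y| := by
                rw [abs_of_neg (by linarith [ht.2] : t - y < 0)]; linarith [ht.2]
              rw [Real.norm_eq_abs, Real.norm_eq_abs,
                abs_of_nonneg (div_nonneg (Real.rpow_nonneg (hw0 t) _) hty.le),
                abs_of_nonneg (div_nonneg (Real.rpow_nonneg (hw0 t) _) hyb.le)]
              gcongr
              exact Real.rpow_nonneg (hw0 t) _
          have key : (∫ t in Set.Ioo a b, w t ^ (-(1 / (lam + p - 1)))) / (2 * (b - a)) ≤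
              ∫ t in Set.Ioo a b, w t ^ (-(1 / (lam + p - 1))) / |t - y| := by
            rw [← integral_div]
            refine setIntegral_mono_on (hi.div_const _) hg measurableSet_Ioo fun t ht => ?_
            have hty : 0 < |t - y| := by
              rw [abs_of_neg (by linarith [ht.2] : t - y < 0)]; linarith [ht.2]
            have hty2 : |t - y| ≤ 2 * (b - a) := by
              rw [abs_of_neg (by linarith [ht.2] : t - y < 0)]
              linarith [ht.1, hy.2]
            gcongr
            exact Real.rpow_nonneg (hw0 t) _
          have hle : c / (2 * Real.pi) ≤
              (1 / Real.pi) * ∫ t in Set.Ioo a b, w t ^ (-(1 / (lam + p - 1))) / |t - y| := by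
            calc c / (2 * Real.pi)
                = (1 / Real.pi) *
                  ((∫ t in Set.Ioo a b, w t ^ (-(1 / (lam + p - 1)))) / (2 * (b - a))) := by
                  rw [hc]; field_simp
              _ ≤ _ := by
                  refine mul_le_mul_of_nonneg_left key (by positivity)
          have hG0 : (0:ℝ) ≤
              (1 / Real.pi) * ∫ t in Set.Ioo a b, w t ^ (-(1 / (lam + p - 1))) / |t - y| :=
            le_trans (by positivity) hle
          refine mul_le_mul_of_nonneg_right ?_ (hw0 y)
          rw [abs_of_nonneg (by positivity), abs_of_nonneg hG0]
          exact Real.rpow_le_rpow (by positivity) hle hp0.le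
        · simp [indicator_of_notMem hy, Real.zero_rpow hp0.ne']
      rw [morrey_scale p lam hp0 _ (by positivity)] at h2
      exact h2.trans (hbound2 a b hab _ (mem_insert _ _))
    -- Step C
    have stepC : morreyNormI p lam w
        ((Set.Ioo a b).indicator fun t => w t ^ (-(1 / (lam + p - 1)))) ≤
        morreyNormI p lam (fun x => w x ^ (-(1 - lam) / (lam + p - 1)))
          ((Set.Ioo a b).indicator 1) := by
      refine morrey_mono p lam hp0 _ _ _ _ fun x => ?_
      by_cases hx : x ∈ Set.Ioo a b
      · rw [indicator_of_mem hx, indicator_of_mem hx]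
        simp only [Pi.one_apply, abs_one, Real.one_rpow, one_mul]
        rcases eq_or_lt_of_le (hw0 x) with h0 | h0
        · rw [← h0, mul_zero]
          exact Real.rpow_nonneg le_rfl _
        · rw [abs_of_nonneg (Real.rpow_nonneg (hw0 x) _), ← Real.rpow_mul (hw0 x)]
          nth_rewrite 2 [← Real.rpow_one (w x)]
          rw [← Real.rpow_add h0]
          have hexp : -(1 / (lam + p - 1)) * p + 1 = -(1 - lam) / (lam + p - 1) := by
            field_simp
            ring
          rw [hexp]
      · simp [indicator_of_notMem hx, Real.zero_rpow hp0.ne']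
    have hBC : ENNReal.ofReal (c / (2 * Real.pi)) *
        morreyNormI p lam w ((Set.Ioo b (2*b-a)).indicator 1) ≤
        ENNReal.ofReal k * morreyNormI p lam (fun x => w x ^ (-(1 - lam) / (lam + p - 1)))
          ((Set.Ioo a b).indicator 1) :=
      stepB.trans (mul_le_mul_right stepC _)
    have hcsplit : ENNReal.ofReal c =
        ENNReal.ofReal (2 * Real.pi) * ENNReal.ofReal (c / (2 * Real.pi)) := by
      rw [← ENNReal.ofReal_mul (by positivity)]
      congr 1
      field_simp
    calc morreyNormI p lam w ((Set.Ioo a b).indicator 1) * ENNReal.ofReal c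
        ≤ (ENNReal.ofReal (Real.pi / Real.log 2) *
            (ENNReal.ofReal k * morreyNormI p lam w ((Set.Ioo b (2*b-a)).indicator 1))) *
          ENNReal.ofReal c := mul_le_mul_left stepA _
      _ = ENNReal.ofReal (Real.pi / Real.log 2) * ENNReal.ofReal k *
            ENNReal.ofReal (2 * Real.pi) *
            (ENNReal.ofReal (c / (2 * Real.pi)) *
              morreyNormI p lam w ((Set.Ioo b (2*b-a)).indicator 1)) := by
          rw [hcsplit]; ring
      _ ≤ ENNReal.ofReal (Real.pi / Real.log 2) * ENNReal.ofReal k *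
            ENNReal.ofReal (2 * Real.pi) *
            (ENNReal.ofReal k * morreyNormI p lam
              (fun x => w x ^ (-(1 - lam) / (lam + p - 1)))
              ((Set.Ioo a b).indicator 1)) := mul_le_mul_right hBC _
      _ = ENNReal.ofReal (2 * Real.pi ^ 2 / Real.log 2 * k ^ 2) *
            morreyNormI p lam (fun x => w x ^ (-(1 - lam) / (lam + p - 1)))
              ((Set.Ioo a b).indicator 1) := by
          rw [← ENNReal.ofReal_mul (by positivity), ← ENNReal.ofReal_mul (by positivity),
            ← mul_assoc, ← ENNReal.ofReal_mul (by positivity)]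
          congr 2
          field_simp
  · rw [integral_undef hi]
    simp
end

section
/- (Lemma 4.1.) Let n ≥ 1, 1 ≤ p < ∞, 0 ≤ λ ≤ 1, x₀ ∈ ℝⁿ and r₀ > 0. Then the unweighted Morrey norm of the characteristic function of the ball B(x₀,r₀) is ‖χ_{B(x₀,r₀)}‖_{p,λ} = |B(x₀,r₀)|^{(1−λ)/p}, where |B(x₀,r₀)| is the Lebesgue measure of the ball. -/
/-! For every ball `B` one has `|B ∩ B₀| ≤ |B|^λ |B₀|^(1-λ)`, so each term of the supremum
defining the Morrey norm of `χ_{B₀}` is at most `|B₀|^((1-λ)/p)`, and the term at `B = B₀`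
equals it. -/

open MeasureTheory Metric

/-- The weighted Morrey norm on `ℝⁿ`: supremum over all balls `B(x,r)` of
`( |B(x,r)|^{-λ} ∫_{B(x,r)} |f|^p w )^{1/p}`, with values in `[0,∞]`. -/
noncomputable def morreyNorm {n : ℕ} (p lam : ℝ)
    (w f : EuclideanSpace ℝ (Fin n) → ℝ) : ENNReal :=
  ⨆ (x : EuclideanSpace ℝ (Fin n)) (r : ℝ) (_ : 0 < r),
    ((volume (Metric.ball x r)) ^ (-lam) *
      ∫⁻ y in Metric.ball x r, ENNReal.ofReal (|f y| ^ p * w y)) ^ (1 / p)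

theorem ofReal_abs_indicator_one_rpow {α : Type*} {s : Set α} {p : ℝ} (hp : p ≠ 0) (y : α) :
    ENNReal.ofReal (|s.indicator 1 y| ^ p) = s.indicator 1 y := by
  by_cases hy : y ∈ s
  · simp [hy]
  · simp [hy, Real.zero_rpow hp]

section MeasureIndicator

variable {α : Type*} [MeasurableSpace α] (μ : Measure α)

theorem setLIntegral_ofReal_abs_indicator_one_rpow {s : Set α} (hs : MeasurableSet s) {p : ℝ}
    (hp : p ≠ 0) (t : Set α) :
    ∫⁻ y in t, ENNReal.ofReal (|s.indicator 1 y| ^ p) ∂μ = μ (s ∩ t) := by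
  simp only [ofReal_abs_indicator_one_rpow hp]
  rw [lintegral_indicator_one hs, Measure.restrict_apply hs]

theorem measure_inter_le_rpow_mul_rpow (s t : Set α) {θ : ℝ} (h0 : 0 ≤ θ) (h1 : θ ≤ 1) :
    μ (s ∩ t) ≤ μ t ^ θ * μ s ^ (1 - θ) :=
  calc μ (s ∩ t) = μ (s ∩ t) ^ θ * μ (s ∩ t) ^ (1 - θ) := by
        rw [← ENNReal.rpow_add_of_nonneg _ _ h0 (by linarith), add_sub_cancel,
          ENNReal.rpow_one]
    _ ≤ μ t ^ θ * μ s ^ (1 - θ) := by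
        gcongr
        exacts [Set.inter_subset_right, Set.inter_subset_left]

end MeasureIndicator

section Morrey

variable {n : ℕ} {p lam : ℝ}

theorem morreyNorm_indicator_one {s : Set (EuclideanSpace ℝ (Fin n))} (hs : MeasurableSet s)
    (hp : p ≠ 0) :
    morreyNorm p lam (fun _ => 1) (s.indicator 1) =
      ⨆ (x : EuclideanSpace ℝ (Fin n)) (r : ℝ) (_ : 0 < r),
        (volume (ball x r) ^ (-lam) * volume (s ∩ ball x r)) ^ (1 / p) := by
  simp only [morreyNorm, mul_one, setLIntegral_ofReal_abs_indicator_one_rpow _ hs hp]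

theorem morreyNorm_indicator_one_le {s : Set (EuclideanSpace ℝ (Fin n))} (hs : MeasurableSet s)
    (hp : 0 < p) (hlam0 : 0 ≤ lam) (hlam1 : lam ≤ 1) :
    morreyNorm p lam (fun _ => 1) (s.indicator 1) ≤ volume s ^ ((1 - lam) / p) := by
  rw [morreyNorm_indicator_one hs hp.ne']
  refine iSup_le fun x => iSup_le fun r => iSup_le fun hr => ?_
  have ha0 : volume (ball x r) ≠ 0 := (measure_ball_pos volume x hr).ne'
  have hatop : volume (ball x r) ≠ ⊤ := measure_ball_lt_top.ne
  calc (volume (ball x r) ^ (-lam) * volume (s ∩ ball x r)) ^ (1 / p)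
      ≤ (volume (ball x r) ^ (-lam) *
          (volume (ball x r) ^ lam * volume s ^ (1 - lam))) ^ (1 / p) := by
        gcongr
        exact measure_inter_le_rpow_mul_rpow volume s _ hlam0 hlam1
    _ = volume s ^ ((1 - lam) / p) := by
        rw [← mul_assoc, ← ENNReal.rpow_add _ _ ha0 hatop, neg_add_cancel, ENNReal.rpow_zero,
          one_mul, ← ENNReal.rpow_mul, mul_one_div]

theorem rpow_le_morreyNorm_indicator_one_ball (x : EuclideanSpace ℝ (Fin n)) {r : ℝ}
    (hr : 0 < r) (hp : p ≠ 0) :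
    volume (ball x r) ^ ((1 - lam) / p) ≤
      morreyNorm p lam (fun _ => 1) ((ball x r).indicator 1) := by
  rw [morreyNorm_indicator_one measurableSet_ball hp]
  refine le_iSup₂_of_le x r (le_iSup_of_le hr (le_of_eq ?_))
  have ha0 : volume (ball x r) ≠ 0 := (measure_ball_pos volume x hr).ne'
  have hatop : volume (ball x r) ≠ ⊤ := measure_ball_lt_top.ne
  rw [Set.inter_self, ← mul_one_div, ENNReal.rpow_mul, sub_eq_neg_add,
    ENNReal.rpow_add _ _ ha0 hatop, ENNReal.rpow_one]

end Morrey

theorem stmt4_general (n : ℕ) (p lam : ℝ) (hp : 1 ≤ p)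
    (hlam0 : 0 ≤ lam) (hlam1 : lam ≤ 1)
    (x₀ : EuclideanSpace ℝ (Fin n)) (r₀ : ℝ) (hr₀ : 0 < r₀) :
    morreyNorm p lam (fun _ => 1) ((Metric.ball x₀ r₀).indicator 1) =
      (volume (Metric.ball x₀ r₀)) ^ ((1 - lam) / p) := by
  have hp0 : 0 < p := zero_lt_one.trans_le hp
  exact le_antisymm (morreyNorm_indicator_one_le measurableSet_ball hp0 hlam0 hlam1)
    (rpow_le_morreyNorm_indicator_one_ball x₀ hr₀ hp0.ne')

/-- Lemma 4.1: the unweighted Morrey norm of the characteristic function of a ball: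
`‖χ_{B(x₀,r₀)}‖_{p,λ} = |B(x₀,r₀)|^{(1-λ)/p}`. -/
theorem stmt4 (n : ℕ) (hn : 1 ≤ n) (p lam : ℝ) (hp : 1 ≤ p)
    (hlam0 : 0 ≤ lam) (hlam1 : lam ≤ 1)
    (x₀ : EuclideanSpace ℝ (Fin n)) (r₀ : ℝ) (hr₀ : 0 < r₀) :
    morreyNorm p lam (fun _ => 1) ((Metric.ball x₀ r₀).indicator 1) =
      (volume (Metric.ball x₀ r₀)) ^ ((1 - lam) / p) :=
  stmt4_general n p lam hp hlam0 hlam1 x₀ r₀ hr₀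
end

section
/- (Lemma 4.2, upper bound.) Let n ≥ 1, 1 ≤ p < ∞, 0 ≤ λ ≤ 1, let w : ℝⁿ → [0,∞) be a measurable weight, x₀ ∈ ℝⁿ and r₀ > 0. Then ‖χ_{B(x₀,r₀)}‖_{p,λ;w} ≤ sup over all x with |x − x₀| < 2r₀ and all 0 < r ≤ r₀ of ( w(B(x,r)) / |B(x,r)|^{λ} )^{1/p}. -/
open MeasureTheory

/- Writing `ν = w dx`, the ball term of `χ_{B(x₀,r₀)}` at `B(x,r)` is
`(ν(B(x₀,r₀) ∩ B(x,r)) |B(x,r)|^{-λ})^{1/p}`. For `r ≤ r₀` it vanishes unless `|x - x₀| < 2r₀`,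
and then it is at most the term of `B(x,r)` itself. For `r > r₀` it is at most the term of
`B(x₀,r₀)`: the weight is at most `ν(B(x₀,r₀))` and, as `λ ≥ 0`, the larger volume only helps. -/

section BallTerm

variable {E : Type*} [NormedAddCommGroup E] [MeasurableSpace E] [BorelSpace E]
  (μ : Measure E) [μ.IsAddHaarMeasure]

theorem MeasureTheory.Measure.addHaar_ball_le_addHaar_ball {r s : ℝ} (h : r ≤ s) (x y : E) :
    μ (Metric.ball x r) ≤ μ (Metric.ball y s) := by
  rw [Measure.addHaar_ball_center μ x, Measure.addHaar_ball_center μ y]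
  exact measure_mono (Metric.ball_subset_ball h)

theorem exists_small_ball_dominating_inter_ball (ν : Measure E) {lam : ℝ} (hlam : 0 ≤ lam)
    (x₀ : E) {r₀ : ℝ} (hr₀ : 0 < r₀) (x : E) (r : ℝ) :
    ∃ x' r', dist x' x₀ < 2 * r₀ ∧ 0 < r' ∧ r' ≤ r₀ ∧
      ν (Metric.ball x₀ r₀ ∩ Metric.ball x r) * μ (Metric.ball x r) ^ (-lam) ≤
        ν (Metric.ball x' r') * μ (Metric.ball x' r') ^ (-lam) := by
  by_cases hsmall : dist x x₀ < 2 * r₀ ∧ 0 < r ∧ r ≤ r₀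
  · exact ⟨x, r, hsmall.1, hsmall.2.1, hsmall.2.2, by gcongr; exact Set.inter_subset_right⟩
  refine ⟨x₀, r₀, by simpa using hr₀, hr₀, le_rfl, ?_⟩
  rcases le_or_gt r r₀ with hr | hr
  · have hempty : Metric.ball x₀ r₀ ∩ Metric.ball x r = ∅ := by
      rcases le_or_gt r 0 with hr0 | hr0
      · simp [Metric.ball_eq_empty.2 hr0]
      · have hfar : 2 * r₀ ≤ dist x x₀ := not_lt.1 fun h => hsmall ⟨h, hr0, hr⟩
        exact (Metric.ball_disjoint_ball (by rw [dist_comm]; linarith)).inter_eq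
    simp [hempty]
  · have hvol : μ (Metric.ball x r) ^ (-lam) ≤ μ (Metric.ball x₀ r₀) ^ (-lam) := by
      rw [ENNReal.rpow_neg, ENNReal.rpow_neg, ENNReal.inv_le_inv]
      exact ENNReal.rpow_le_rpow (Measure.addHaar_ball_le_addHaar_ball μ hr.le x₀ x) hlam
    exact mul_le_mul' (measure_mono Set.inter_subset_left) hvol

end BallTerm

theorem setLIntegral_indicator_one_rpow_mul {α : Type*} [MeasurableSpace α] (μ : Measure α)
    [SFinite μ] {s : Set α} (hs : MeasurableSet s) {p : ℝ} (hp : p ≠ 0) (w : α → ℝ)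
    (t : Set α) :
    ∫⁻ y in t, ENNReal.ofReal (|s.indicator 1 y| ^ p * w y) ∂μ =
      μ.withDensity (fun y => ENNReal.ofReal (w y)) (s ∩ t) := by
  have hpointwise : (fun y => ENNReal.ofReal (|s.indicator 1 y| ^ p * w y)) =
      s.indicator fun y => ENNReal.ofReal (w y) := by
    ext y
    by_cases hy : y ∈ s <;> simp [hy, Real.zero_rpow hp]
  rw [hpointwise, lintegral_indicator hs, Measure.restrict_restrict hs, withDensity_apply']

theorem stmt6_general (n : ℕ) (p lam : ℝ) (hp : 1 ≤ p)
    (hlam0 : 0 ≤ lam)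
    (w : EuclideanSpace ℝ (Fin n) → ℝ)
    (x₀ : EuclideanSpace ℝ (Fin n)) (r₀ : ℝ) (hr₀ : 0 < r₀) :
    morreyNorm p lam w ((Metric.ball x₀ r₀).indicator 1) ≤
      ⨆ (x : EuclideanSpace ℝ (Fin n)) (_ : dist x x₀ < 2 * r₀)
          (r : ℝ) (_ : 0 < r) (_ : r ≤ r₀),
        ((∫⁻ y in Metric.ball x r, ENNReal.ofReal (w y)) *
          (volume (Metric.ball x r)) ^ (-lam)) ^ (1 / p) := by
  have hp0 : 0 < p := one_pos.trans_le hp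
  set ν := volume.withDensity fun y => ENNReal.ofReal (w y)
  refine iSup₂_le fun x r => iSup_le fun _ => ?_
  obtain ⟨x', r', hx', hr', hr'₀, hdom⟩ :=
    exists_small_ball_dominating_inter_ball volume ν hlam0 x₀ hr₀ x r
  rw [setLIntegral_indicator_one_rpow_mul volume measurableSet_ball hp0.ne', mul_comm]
  calc _ ≤ (ν (Metric.ball x' r') * volume (Metric.ball x' r') ^ (-lam)) ^ (1 / p) := by
        gcongr
    _ ≤ _ := by
        rw [withDensity_apply']
        exact le_iSup₂_of_le x' hx' <| le_iSup₂_of_le r' hr' <| le_iSup_of_le hr'₀ le_rfl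

/-- Lemma 4.2 (upper bound):
`‖χ_{B(x₀,r₀)}‖_{p,λ;w} ≤ sup_{|x-x₀|<2r₀, 0<r≤r₀} ( w(B(x,r)) / |B(x,r)|^λ )^{1/p}`. -/
theorem stmt6 (n : ℕ) (hn : 1 ≤ n) (p lam : ℝ) (hp : 1 ≤ p)
    (hlam0 : 0 ≤ lam) (hlam1 : lam ≤ 1)
    (w : EuclideanSpace ℝ (Fin n) → ℝ) (hw : Measurable w) (hw0 : ∀ x, 0 ≤ w x)
    (x₀ : EuclideanSpace ℝ (Fin n)) (r₀ : ℝ) (hr₀ : 0 < r₀) :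
    morreyNorm p lam w ((Metric.ball x₀ r₀).indicator 1) ≤
      ⨆ (x : EuclideanSpace ℝ (Fin n)) (_ : dist x x₀ < 2 * r₀)
          (r : ℝ) (_ : 0 < r) (_ : r ≤ r₀),
        ((∫⁻ y in Metric.ball x r, ENNReal.ofReal (w y)) *
          (volume (Metric.ball x r)) ^ (-lam)) ^ (1 / p) :=
  stmt6_general n p lam hp hlam0 w x₀ r₀ hr₀
end

section
/- (Corollary 4.3, sufficiency.) Let n ≥ 1, 1 ≤ p < ∞, 0 ≤ λ ≤ 1, let w : ℝⁿ → [0,∞) be a measurable weight, x₀ ∈ ℝⁿ and r₀ > 0. If sup over all x with |x − x₀| < 2r₀ and all 0 < r ≤ r₀ of w(B(x,r)) / r^{nλ} is finite, then ‖χ_{B(x₀,r₀)}‖_{p,λ;w} < ∞, i.e. χ_{B(x₀,r₀)} belongs to L^{p,λ}(ℝⁿ,w). -/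
/-!
On a ball `B(x, r)` with `r ≤ r₀` that meets `B(x₀, r₀)`, the centre `x` lies within `2 r₀` of
`x₀`, so the hypothesis bounds `w(B(x, r))` by `M r^{nλ}`, `M` the finite supremum, and this is
cancelled exactly by `|B(x, r)|^{-λ} = |B(0, 1)|^{-λ} r^{-nλ}`. On a ball with `r > r₀` one instead
bounds the weight by `w(B(x₀, r₀)) ≤ M r₀^{nλ}` and the volume factor by `|B(x, r₀)|^{-λ}`, using
`λ ≥ 0`. Disjoint balls contribute nothing.
-/

open MeasureTheory

open Metric Module Set
open scoped ENNReal

section AddHaar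

variable {E : Type*} [NormedAddCommGroup E] [NormedSpace ℝ E] [FiniteDimensional ℝ E]
  [MeasurableSpace E] [BorelSpace E] (μ : Measure E) [μ.IsAddHaarMeasure]

theorem addHaar_ball_rpow_neg_mul_ofReal_rpow (x : E) {r : ℝ} (hr : 0 < r) (lam : ℝ) :
    μ (ball x r) ^ (-lam) * ENNReal.ofReal (r ^ ((finrank ℝ E : ℝ) * lam)) =
      μ (ball 0 1) ^ (-lam) := by
  rw [Measure.addHaar_ball_of_pos μ x hr,
    ENNReal.mul_rpow_of_ne_top ENNReal.ofReal_ne_top measure_ball_lt_top.ne,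
    ENNReal.ofReal_rpow_of_pos (pow_pos hr _), mul_right_comm,
    ← ENNReal.ofReal_mul (by positivity), ← Real.rpow_natCast, ← Real.rpow_mul hr.le,
    ← Real.rpow_add hr]
  simp

theorem addHaar_ball_rpow_neg_mul_le {x : E} {r s lam : ℝ} {I M : ℝ≥0∞} (hs : 0 < s)
    (hsr : s ≤ r) (hlam : 0 ≤ lam)
    (hI : I ≤ M * ENNReal.ofReal (s ^ ((finrank ℝ E : ℝ) * lam))) :
    μ (ball x r) ^ (-lam) * I ≤ μ (ball 0 1) ^ (-lam) * M :=
  calc μ (ball x r) ^ (-lam) * I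
      ≤ μ (ball x s) ^ (-lam) * (M * ENNReal.ofReal (s ^ ((finrank ℝ E : ℝ) * lam))) := by
        rw [ENNReal.rpow_neg, ENNReal.rpow_neg]
        gcongr
    _ = μ (ball 0 1) ^ (-lam) * M := by
        rw [mul_left_comm, addHaar_ball_rpow_neg_mul_ofReal_rpow μ x hs, mul_comm]

theorem addHaar_ball_rpow_neg_mul_setLIntegral_indicator_ball_le {g : E → ℝ≥0∞} {x₀ : E}
    {r₀ lam : ℝ} {M : ℝ≥0∞} (hr₀ : 0 < r₀) (hlam : 0 ≤ lam)
    (hM : ∀ x, dist x x₀ < 2 * r₀ → ∀ r, 0 < r → r ≤ r₀ →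
      ∫⁻ y in ball x r, g y ∂μ ≤ M * ENNReal.ofReal (r ^ ((finrank ℝ E : ℝ) * lam)))
    (x : E) {r : ℝ} (hr : 0 < r) :
    μ (ball x r) ^ (-lam) * ∫⁻ y in ball x r, (ball x₀ r₀).indicator g y ∂μ ≤
      μ (ball 0 1) ^ (-lam) * M := by
  rw [setLIntegral_indicator measurableSet_ball]
  rcases lt_or_ge r₀ r with hr₀r | hrr₀
  · have hx₀ : dist x₀ x₀ < 2 * r₀ := by rw [dist_self]; positivity
    exact addHaar_ball_rpow_neg_mul_le μ hr₀ hr₀r.le hlam <|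
      (lintegral_mono_set inter_subset_left).trans (hM x₀ hx₀ r₀ hr₀ le_rfl)
  rcases lt_or_ge (dist x x₀) (2 * r₀) with hx | hx
  · exact addHaar_ball_rpow_neg_mul_le μ hr le_rfl hlam <|
      (lintegral_mono_set inter_subset_right).trans (hM x hx r hr hrr₀)
  · rw [(ball_disjoint_ball (by rw [dist_comm]; linarith)).inter_eq, setLIntegral_empty,
      mul_zero]
    exact bot_le

end AddHaar

theorem ofReal_abs_indicator_one_rpow_mul {α : Type*} {p : ℝ} (hp : p ≠ 0) (s : Set α)
    (w : α → ℝ) (y : α) :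
    ENNReal.ofReal (|s.indicator 1 y| ^ p * w y) =
      s.indicator (fun y ↦ ENNReal.ofReal (w y)) y := by
  by_cases hy : y ∈ s <;> simp [hy, hp]

theorem morreyNorm_lt_top_of_forall_le {n : ℕ} {p lam : ℝ} (hp : 0 ≤ p)
    {w f : EuclideanSpace ℝ (Fin n) → ℝ} {C : ℝ≥0∞} (hC : C ≠ ⊤)
    (h : ∀ x r, 0 < r →
      volume (ball x r) ^ (-lam) * ∫⁻ y in ball x r, ENNReal.ofReal (|f y| ^ p * w y) ≤ C) :
    morreyNorm p lam w f < ⊤ :=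
  (iSup_le fun x ↦ iSup₂_le fun r hr ↦ ENNReal.rpow_le_rpow (h x r hr) (by positivity)).trans_lt
    (ENNReal.rpow_lt_top_of_nonneg (by positivity) hC)

theorem stmt7_general (n : ℕ) (p lam : ℝ) (hp : 1 ≤ p)
    (hlam0 : 0 ≤ lam)
    (w : EuclideanSpace ℝ (Fin n) → ℝ)
    (x₀ : EuclideanSpace ℝ (Fin n)) (r₀ : ℝ) (hr₀ : 0 < r₀)
    (hsup : (⨆ (x : EuclideanSpace ℝ (Fin n)) (_ : dist x x₀ < 2 * r₀)
        (r : ℝ) (_ : 0 < r) (_ : r ≤ r₀),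
          (∫⁻ y in Metric.ball x r, ENNReal.ofReal (w y)) /
            ENNReal.ofReal (r ^ ((n : ℝ) * lam))) < ⊤) :
    morreyNorm p lam w ((Metric.ball x₀ r₀).indicator 1) < ⊤ := by
  set M := ⨆ (x : EuclideanSpace ℝ (Fin n)) (_ : dist x x₀ < 2 * r₀)
    (r : ℝ) (_ : 0 < r) (_ : r ≤ r₀),
      (∫⁻ y in Metric.ball x r, ENNReal.ofReal (w y)) / ENNReal.ofReal (r ^ ((n : ℝ) * lam))
  have hM : ∀ x, dist x x₀ < 2 * r₀ → ∀ r, 0 < r → r ≤ r₀ →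
      ∫⁻ y in ball x r, ENNReal.ofReal (w y) ≤
        M * ENNReal.ofReal (r ^ ((finrank ℝ (EuclideanSpace ℝ (Fin n)) : ℝ) * lam)) := by
    intro x hx r hr hrr₀
    rw [finrank_euclideanSpace_fin,
      ← ENNReal.div_le_iff (ENNReal.ofReal_pos.2 (by positivity)).ne' ENNReal.ofReal_ne_top]
    exact le_iSup₂_of_le x hx (le_iSup₂_of_le r hr (le_iSup_of_le hrr₀ le_rfl))
  have hV : volume (ball (0 : EuclideanSpace ℝ (Fin n)) 1) ^ (-lam) ≠ ⊤ :=
    ENNReal.rpow_ne_top_of_ne_zero (measure_ball_pos _ _ one_pos).ne' measure_ball_lt_top.ne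
  refine morreyNorm_lt_top_of_forall_le (by linarith) (ENNReal.mul_ne_top hV hsup.ne)
    fun x r hr ↦ ?_
  simp_rw [ofReal_abs_indicator_one_rpow_mul (by linarith : p ≠ 0)]
  exact addHaar_ball_rpow_neg_mul_setLIntegral_indicator_ball_le volume hr₀ hlam0 hM x hr

/-- Corollary 4.3 (sufficiency): if
`sup_{|x-x₀|<2r₀, 0<r≤r₀} w(B(x,r)) / r^{nλ} < ∞` then
`χ_{B(x₀,r₀)} ∈ L^{p,λ}(ℝⁿ,w)`. -/
theorem stmt7 (n : ℕ) (hn : 1 ≤ n) (p lam : ℝ) (hp : 1 ≤ p)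
    (hlam0 : 0 ≤ lam) (hlam1 : lam ≤ 1)
    (w : EuclideanSpace ℝ (Fin n) → ℝ) (hw : Measurable w) (hw0 : ∀ x, 0 ≤ w x)
    (x₀ : EuclideanSpace ℝ (Fin n)) (r₀ : ℝ) (hr₀ : 0 < r₀)
    (hsup : (⨆ (x : EuclideanSpace ℝ (Fin n)) (_ : dist x x₀ < 2 * r₀)
        (r : ℝ) (_ : 0 < r) (_ : r ≤ r₀),
          (∫⁻ y in Metric.ball x r, ENNReal.ofReal (w y)) /
            ENNReal.ofReal (r ^ ((n : ℝ) * lam))) < ⊤) :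
    morreyNorm p lam w ((Metric.ball x₀ r₀).indicator 1) < ⊤ :=
  stmt7_general n p lam hp hlam0 w x₀ r₀ hr₀ hsup
end

section
/- Let n ≥ 1 and let ν be a real number with ν > −n, and let e₁ ∈ ℝⁿ be the first standard basis vector. Then there exist constants c₁, c₂ > 0, depending only on n and ν, such that the integral I(t) = ∫_{B(0,t)} |y − e₁|^{ν} dy satisfies: c₁ t^{n} ≤ I(t) ≤ c₂ t^{n} for all 0 < t ≤ 1, and c₁ t^{n+ν} ≤ I(t) ≤ c₂ t^{n+ν} for all t ≥ 1. -/
/-!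
Write `s = max 1 t`; the claim is `I(t) ≍ tⁿ sᵛ` for all `t > 0`. Lower bound: the ball of
radius `t/4` about `-(t/2) e₁` lies in `B(0,t)` and stays at distance between `s/4` and `2s`
from `e₁`, so the integrand is `≍ sᵛ` on a set of measure `≍ tⁿ`. Upper bound: for `t ≤ 1/2`
the same pointwise argument works on `B(0,t)` itself; for `t > 1/2` enlarge `B(0,t)` to
`B(e₁, 2s)` (note `s ≤ 2t`), and use that translation and dilation give
`∫_{B(e₁,R)} |y - e₁|ᵛ = R^{n+ν} ∫_{B(0,1)} |z|ᵛ`, the last integral being finite as `ν > -n`.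
-/

open MeasureTheory Metric Set Module
open scoped ENNReal

section RpowBounds

variable {a b s x : ℝ}

theorem min_rpow_mul_rpow_le_rpow (ν : ℝ) (ha : 0 < a) (hs : 0 < s) (hax : a * s ≤ x)
    (hxb : x ≤ b * s) : min (a ^ ν) (b ^ ν) * s ^ ν ≤ x ^ ν := by
  have hb : 0 < b := pos_of_mul_pos_left ((mul_pos ha hs).trans_le (hax.trans hxb)) hs.le
  rw [min_mul_of_nonneg _ _ (by positivity), ← Real.mul_rpow ha.le hs.le,
    ← Real.mul_rpow hb.le hs.le]
  rcases le_total 0 ν with hν | hν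
  · exact (min_le_left _ _).trans (Real.rpow_le_rpow (by positivity) hax hν)
  · exact (min_le_right _ _).trans
      (Real.rpow_le_rpow_of_nonpos ((mul_pos ha hs).trans_le hax) hxb hν)

theorem rpow_le_max_rpow_mul_rpow (ν : ℝ) (ha : 0 < a) (hs : 0 < s) (hax : a * s ≤ x)
    (hxb : x ≤ b * s) : x ^ ν ≤ max (a ^ ν) (b ^ ν) * s ^ ν := by
  have hb : 0 < b := pos_of_mul_pos_left ((mul_pos ha hs).trans_le (hax.trans hxb)) hs.le
  rw [max_mul_of_nonneg _ _ (by positivity), ← Real.mul_rpow ha.le hs.le,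
    ← Real.mul_rpow hb.le hs.le]
  rcases le_total 0 ν with hν | hν
  · exact (Real.rpow_le_rpow ((mul_pos ha hs).le.trans hax) hxb hν).trans (le_max_right _ _)
  · exact (Real.rpow_le_rpow_of_nonpos (mul_pos ha hs) hax hν).trans (le_max_left _ _)

theorem pow_mul_max_one_rpow_of_le_one {t : ℝ} (d : ℕ) (ν : ℝ) (ht : t ≤ 1) :
    t ^ d * max 1 t ^ ν = t ^ (d : ℝ) := by
  rw [max_eq_left ht, Real.one_rpow, mul_one, Real.rpow_natCast]

theorem pow_mul_max_one_rpow_of_one_le {t : ℝ} (d : ℕ) (ν : ℝ) (ht : 1 ≤ t) :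
    t ^ d * max 1 t ^ ν = t ^ ((d : ℝ) + ν) := by
  rw [max_eq_right ht, Real.rpow_add (by linarith), Real.rpow_natCast]

end RpowBounds

section HaarBall

variable {E : Type*} [NormedAddCommGroup E] [NormedSpace ℝ E] [MeasurableSpace E]
  [BorelSpace E] [FiniteDimensional ℝ E] (μ : Measure E) [μ.IsAddHaarMeasure]

theorem setLIntegral_unitBall_comp_affine {f : E → ℝ≥0∞} (hf : Measurable f) (e : E) {R : ℝ}
    (hR : 0 < R) :
    ∫⁻ z in ball 0 1, f (e + R • z) ∂μ =
      ENNReal.ofReal ((R ^ finrank ℝ E)⁻¹) * ∫⁻ y in ball e R, f y ∂μ := by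
  have hmap : μ.map (fun z => e + R • z) = ENNReal.ofReal ((R ^ finrank ℝ E)⁻¹) • μ := by
    rw [show (fun z : E => e + R • z) = (e + ·) ∘ (R • ·) from rfl,
      ← Measure.map_map (by fun_prop) (by fun_prop), Measure.map_addHaar_smul μ hR.ne',
      Measure.map_smul, map_add_left_eq_self, abs_of_pos (by positivity)]
  have hpre : (fun z : E => e + R • z) ⁻¹' ball e R = ball 0 1 := by
    ext z
    simp [norm_smul, abs_of_pos hR, hR]
  rw [← hpre, ← setLIntegral_map measurableSet_ball hf (by fun_prop), hmap,
    Measure.restrict_smul, lintegral_smul_measure, smul_eq_mul]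

theorem setLIntegral_ball_norm_sub_rpow (e : E) (ν : ℝ) {R : ℝ} (hR : 0 < R) :
    ∫⁻ y in ball e R, ENNReal.ofReal (‖y - e‖ ^ ν) ∂μ =
      ENNReal.ofReal (R ^ (finrank ℝ E + ν)) * ∫⁻ z in ball 0 1, ENNReal.ofReal (‖z‖ ^ ν) ∂μ := by
  have hRd : 0 < R ^ finrank ℝ E := by positivity
  have hcomp := setLIntegral_unitBall_comp_affine μ
    (f := fun y => ENNReal.ofReal (‖y - e‖ ^ ν)) (by fun_prop) e hR
  simp only [add_sub_cancel_left, norm_smul, Real.norm_eq_abs, abs_of_pos hR,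
    Real.mul_rpow hR.le (norm_nonneg _), ENNReal.ofReal_mul (Real.rpow_nonneg hR.le ν)] at hcomp
  rw [lintegral_const_mul _ (by fun_prop)] at hcomp
  rw [Real.rpow_add hR, Real.rpow_natCast, ENNReal.ofReal_mul hRd.le, mul_assoc, hcomp,
    ← mul_assoc, ← ENNReal.ofReal_mul hRd.le, mul_inv_cancel₀ hRd.ne', ENNReal.ofReal_one, one_mul]

theorem setLIntegral_unitBall_norm_rpow_lt_top [Nontrivial E] {ν : ℝ}
    (hν : -(finrank ℝ E : ℝ) < ν) :
    ∫⁻ z in ball 0 1, ENNReal.ofReal (‖z‖ ^ ν) ∂μ < ∞ := by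
  have hint : IntegrableOn (fun z : E => ‖z‖ ^ ν) (ball 0 1) μ :=
    integrableOn_ball_of_norm_le_rpow finrank_pos (C := 1) (α := -ν) (by linarith)
      (Filter.Eventually.of_forall fun z => by
        simp [abs_of_nonneg (Real.rpow_nonneg (norm_nonneg z) ν)])
      (by fun_prop : Measurable fun z : E => ‖z‖ ^ ν).aestronglyMeasurable
  exact hint.setLIntegral_lt_top

theorem ofReal_mul_measure_unitBall_le_setLIntegral {f : E → ℝ} {c : E} {r m : ℝ} (hr : 0 < r)
    (h : ∀ y ∈ ball c r, m ≤ f y) :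
    ENNReal.ofReal (m * r ^ finrank ℝ E) * μ (ball 0 1) ≤
      ∫⁻ y in ball c r, ENNReal.ofReal (f y) ∂μ :=
  calc ENNReal.ofReal (m * r ^ finrank ℝ E) * μ (ball 0 1)
      = ∫⁻ _ in ball c r, ENNReal.ofReal m ∂μ := by
        rw [setLIntegral_const, Measure.addHaar_ball_of_pos μ c hr,
          ENNReal.ofReal_mul' (by positivity), mul_assoc]
    _ ≤ _ := setLIntegral_mono' measurableSet_ball fun y hy => ENNReal.ofReal_le_ofReal (h y hy)

theorem setLIntegral_le_ofReal_mul_measure_unitBall {f : E → ℝ} {c : E} {r M : ℝ} (hr : 0 < r)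
    (h : ∀ y ∈ ball c r, f y ≤ M) :
    ∫⁻ y in ball c r, ENNReal.ofReal (f y) ∂μ ≤
      ENNReal.ofReal (M * r ^ finrank ℝ E) * μ (ball 0 1) :=
  calc ∫⁻ y in ball c r, ENNReal.ofReal (f y) ∂μ
      ≤ ∫⁻ _ in ball c r, ENNReal.ofReal M ∂μ :=
        setLIntegral_mono' measurableSet_ball fun y hy => ENNReal.ofReal_le_ofReal (h y hy)
    _ = _ := by
        rw [setLIntegral_const, Measure.addHaar_ball_of_pos μ c hr,
          ENNReal.ofReal_mul' (by positivity), mul_assoc]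

variable {e : E} {t : ℝ}

theorem ofReal_mul_measure_unitBall_le_setLIntegral_ball_norm_sub_rpow (he : ‖e‖ = 1) (ν : ℝ)
    (ht : 0 < t) :
    ENNReal.ofReal (min (4⁻¹ ^ ν) (2 ^ ν) * 4⁻¹ ^ finrank ℝ E *
        (t ^ finrank ℝ E * max 1 t ^ ν)) * μ (ball 0 1) ≤
      ∫⁻ y in ball 0 t, ENNReal.ofReal (‖y - e‖ ^ ν) ∂μ := by
  set s := max 1 t
  have hs : s ≤ 1 + t := max_le (by linarith) (by linarith)
  set c : E := -(t / 2) • e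
  have hc : ‖c‖ = t / 2 := by simp [c, norm_smul, he, abs_of_pos ht]
  have hce : ‖c - e‖ = t / 2 + 1 := by
    rw [show c - e = -(t / 2 + 1) • e by simp only [c]; module, norm_smul, he, norm_neg,
      Real.norm_of_nonneg (by positivity), mul_one]
  have hsub : ball c (t / 4) ⊆ ball 0 t := by
    intro y hy
    rw [mem_ball_iff_norm] at hy
    rw [mem_ball_zero_iff]
    linarith [norm_le_norm_add_norm_sub' y c]
  have hbound : ∀ y ∈ ball c (t / 4), min (4⁻¹ ^ ν) (2 ^ ν) * s ^ ν ≤ ‖y - e‖ ^ ν := by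
    intro y hy
    rw [mem_ball_iff_norm] at hy
    refine min_rpow_mul_rpow_le_rpow ν (by norm_num) (by positivity) ?_ ?_
    · linarith [norm_sub_le_norm_sub_add_norm_sub c y e, norm_sub_rev c y]
    · linarith [norm_sub_le_norm_sub_add_norm_sub y c e, le_max_left 1 t, le_max_right 1 t]
  calc ENNReal.ofReal (min (4⁻¹ ^ ν) (2 ^ ν) * 4⁻¹ ^ finrank ℝ E * (t ^ finrank ℝ E * s ^ ν)) *
        μ (ball 0 1)
      = ENNReal.ofReal (min (4⁻¹ ^ ν) (2 ^ ν) * s ^ ν * (t / 4) ^ finrank ℝ E) *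
          μ (ball 0 1) := by
        congr 2
        ring
    _ ≤ ∫⁻ y in ball c (t / 4), ENNReal.ofReal (‖y - e‖ ^ ν) ∂μ :=
        ofReal_mul_measure_unitBall_le_setLIntegral μ (by positivity) hbound
    _ ≤ _ := lintegral_mono_set hsub

theorem setLIntegral_ball_norm_sub_rpow_le_of_le_half (he : ‖e‖ = 1) (ν : ℝ) (ht : 0 < t)
    (ht2 : t ≤ 2⁻¹) :
    ∫⁻ y in ball 0 t, ENNReal.ofReal (‖y - e‖ ^ ν) ∂μ ≤
      ENNReal.ofReal (max (2⁻¹ ^ ν) (2 ^ ν) * (t ^ finrank ℝ E * max 1 t ^ ν)) *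
        μ (ball 0 1) := by
  have hbound : ∀ y ∈ ball (0 : E) t, ‖y - e‖ ^ ν ≤ max (2⁻¹ ^ ν) (2 ^ ν) * 1 ^ ν := by
    intro y hy
    rw [mem_ball_zero_iff] at hy
    refine rpow_le_max_rpow_mul_rpow ν (by norm_num) one_pos ?_ ?_
    · linarith [norm_sub_norm_le e y, norm_sub_rev e y]
    · linarith [norm_sub_le y e]
  convert setLIntegral_le_ofReal_mul_measure_unitBall μ ht hbound using 3
  rw [show max 1 t = 1 from max_eq_left (by linarith)]
  ring

theorem setLIntegral_ball_norm_sub_rpow_le_of_half_lt (he : ‖e‖ = 1) (ν : ℝ) (ht2 : 2⁻¹ < t) :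
    ∫⁻ y in ball 0 t, ENNReal.ofReal (‖y - e‖ ^ ν) ∂μ ≤
      ENNReal.ofReal (2 ^ ((finrank ℝ E : ℝ) + ν) * 2 ^ finrank ℝ E *
          (t ^ finrank ℝ E * max 1 t ^ ν)) *
        ∫⁻ z in ball 0 1, ENNReal.ofReal (‖z‖ ^ ν) ∂μ := by
  set d := finrank ℝ E
  set s := max 1 t
  have hs0 : 0 < s := lt_max_of_lt_left one_pos
  have hs : s ≤ 2 * t := max_le (by linarith) (by linarith)
  have hsub : ball (0 : E) t ⊆ ball e (2 * s) := by
    intro y hy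
    rw [mem_ball_zero_iff] at hy
    rw [mem_ball_iff_norm]
    linarith [norm_sub_le y e, le_max_left 1 t, le_max_right 1 t]
  have hsd : s ^ d ≤ 2 ^ d * t ^ d := by
    rw [← mul_pow]
    exact pow_le_pow_left₀ hs0.le hs d
  calc ∫⁻ y in ball 0 t, ENNReal.ofReal (‖y - e‖ ^ ν) ∂μ
      ≤ ∫⁻ y in ball e (2 * s), ENNReal.ofReal (‖y - e‖ ^ ν) ∂μ := lintegral_mono_set hsub
    _ = ENNReal.ofReal (2 ^ ((d : ℝ) + ν) * (s ^ d * s ^ ν)) *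
          ∫⁻ z in ball 0 1, ENNReal.ofReal (‖z‖ ^ ν) ∂μ := by
        rw [setLIntegral_ball_norm_sub_rpow μ e ν (by positivity),
          Real.mul_rpow (by norm_num) hs0.le, Real.rpow_add hs0, Real.rpow_natCast]
    _ ≤ _ := by
        gcongr ENNReal.ofReal ?_ * _
        calc 2 ^ ((d : ℝ) + ν) * (s ^ d * s ^ ν)
            ≤ 2 ^ ((d : ℝ) + ν) * (2 ^ d * t ^ d * s ^ ν) := by gcongr
          _ = _ := by ring

theorem exists_bounds_setLIntegral_ball_norm_sub_rpow (he : ‖e‖ = 1) {ν : ℝ}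
    (hν : -(finrank ℝ E : ℝ) < ν) :
    ∃ c₁ c₂ : ℝ, 0 < c₁ ∧ 0 < c₂ ∧ ∀ t : ℝ, 0 < t →
      ENNReal.ofReal (c₁ * (t ^ finrank ℝ E * max 1 t ^ ν)) ≤
          ∫⁻ y in ball 0 t, ENNReal.ofReal (‖y - e‖ ^ ν) ∂μ ∧
        ∫⁻ y in ball 0 t, ENNReal.ofReal (‖y - e‖ ^ ν) ∂μ ≤
          ENNReal.ofReal (c₂ * (t ^ finrank ℝ E * max 1 t ^ ν)) := by
  have : Nontrivial E := nontrivial_of_ne e 0 (norm_ne_zero_iff.1 (by simp [he]))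
  set d := finrank ℝ E
  set V := μ (ball (0 : E) 1)
  set K := ∫⁻ z in ball 0 1, ENNReal.ofReal (‖z‖ ^ ν) ∂μ
  have hV : V ≠ ∞ := measure_ball_lt_top.ne
  have hK : K ≠ ∞ := (setLIntegral_unitBall_norm_rpow_lt_top μ hν).ne
  have hV0 : 0 < V.toReal := ENNReal.toReal_pos (measure_ball_pos μ 0 one_pos).ne' hV
  have absorb (a x : ℝ) {A : ℝ≥0∞} (hA : A ≠ ∞) :
      ENNReal.ofReal (a * x) * A = ENNReal.ofReal (a * A.toReal * x) := by
    rw [← ENNReal.ofReal_toReal hA, ← ENNReal.ofReal_mul' ENNReal.toReal_nonneg,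
      ENNReal.toReal_ofReal ENNReal.toReal_nonneg, mul_right_comm]
  set c₀ := max (2⁻¹ ^ ν) (2 ^ ν) * V.toReal
  set c₁ := 2 ^ ((d : ℝ) + ν) * 2 ^ d * K.toReal
  refine ⟨min (4⁻¹ ^ ν) (2 ^ ν) * 4⁻¹ ^ d * V.toReal, max c₀ c₁, by positivity,
    lt_max_of_lt_left (by positivity), fun t ht => ⟨?_, ?_⟩⟩
  · rw [← absorb _ _ hV]
    exact ofReal_mul_measure_unitBall_le_setLIntegral_ball_norm_sub_rpow μ he ν ht
  · rcases le_or_gt t 2⁻¹ with hsmall | hlarge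
    · calc _ ≤ _ := setLIntegral_ball_norm_sub_rpow_le_of_le_half μ he ν ht hsmall
        _ = ENNReal.ofReal (c₀ * (t ^ d * max 1 t ^ ν)) := absorb _ _ hV
        _ ≤ _ := by gcongr; exact le_max_left _ _
    · calc _ ≤ _ := setLIntegral_ball_norm_sub_rpow_le_of_half_lt μ he ν hlarge
        _ = ENNReal.ofReal (c₁ * (t ^ d * max 1 t ^ ν)) := absorb _ _ hK
        _ ≤ _ := by gcongr; exact le_max_right _ _

end HaarBall

/-- Two-sided estimate for `I(t) = ∫_{B(0,t)} |y - e₁|^ν dy` when `ν > -n`: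
`I(t) ≍ tⁿ` for `0 < t ≤ 1` and `I(t) ≍ t^{n+ν}` for `t ≥ 1`,
with constants depending only on `n` and `ν`. -/
theorem stmt9 (n : ℕ) (hn : 1 ≤ n) (ν : ℝ) (hν : -(n : ℝ) < ν) :
    ∃ c₁ c₂ : ℝ, 0 < c₁ ∧ 0 < c₂ ∧
      (∀ t : ℝ, 0 < t → t ≤ 1 →
        ENNReal.ofReal (c₁ * t ^ (n : ℝ)) ≤
          (∫⁻ y in Metric.ball (0 : EuclideanSpace ℝ (Fin n)) t,
            ENNReal.ofReal (‖y - EuclideanSpace.single (⟨0, hn⟩ : Fin n) (1 : ℝ)‖ ^ ν)) ∧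
        (∫⁻ y in Metric.ball (0 : EuclideanSpace ℝ (Fin n)) t,
            ENNReal.ofReal (‖y - EuclideanSpace.single (⟨0, hn⟩ : Fin n) (1 : ℝ)‖ ^ ν)) ≤
          ENNReal.ofReal (c₂ * t ^ (n : ℝ))) ∧
      (∀ t : ℝ, 1 ≤ t →
        ENNReal.ofReal (c₁ * t ^ ((n : ℝ) + ν)) ≤
          (∫⁻ y in Metric.ball (0 : EuclideanSpace ℝ (Fin n)) t,
            ENNReal.ofReal (‖y - EuclideanSpace.single (⟨0, hn⟩ : Fin n) (1 : ℝ)‖ ^ ν)) ∧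
        (∫⁻ y in Metric.ball (0 : EuclideanSpace ℝ (Fin n)) t,
            ENNReal.ofReal (‖y - EuclideanSpace.single (⟨0, hn⟩ : Fin n) (1 : ℝ)‖ ^ ν)) ≤
          ENNReal.ofReal (c₂ * t ^ ((n : ℝ) + ν))) := by
  have he : ‖EuclideanSpace.single (⟨0, hn⟩ : Fin n) (1 : ℝ)‖ = 1 := by simp
  obtain ⟨c₁, c₂, hc₁, hc₂, hbounds⟩ := exists_bounds_setLIntegral_ball_norm_sub_rpow volume he
    (by rwa [finrank_euclideanSpace_fin])
  simp only [finrank_euclideanSpace_fin] at hbounds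
  refine ⟨c₁, c₂, hc₁, hc₂, fun t ht ht1 => ?_, fun t ht => ?_⟩
  · rw [← pow_mul_max_one_rpow_of_le_one n ν ht1]
    exact hbounds t ht
  · rw [← pow_mul_max_one_rpow_of_one_le n ν ht]
    exact hbounds t (by linarith)
end

section
/- (Remark 4.4, norm estimate.) Let n ≥ 1, 1 ≤ p < ∞, 0 ≤ λ ≤ 1, and let ν be a real number with ν > −n and ν ≥ nλ − n. Then there exist constants c₁, c₂ > 0, depending only on n, p, λ and ν, such that for every x₀ ∈ ℝⁿ, r₀ > 0 and a ∈ B(x₀,r₀), the weight w(y) = |y − a|^{ν} satisfies c₁ · r₀^{(n+ν−nλ)/p} ≤ ‖χ_{B(x₀,r₀)}‖_{p,λ;w} ≤ c₂ · r₀^{(n+ν−nλ)/p}. -/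
open MeasureTheory

open Metric Set Module
open scoped ENNReal

/-!
Write `d = dim E` and `e = d + ν - dλ ≥ 0`. The lower bound is read off the ball `B(x₀,r₀)`
itself: the annulus `B(x₀,r₀) \ B(a,r₀/2)` carries at least half of its volume, and there
`|y - a| ≍ r₀`. For the upper bound, `B(x,r)` meets `B(x₀,r₀) ⊆ B(a,2r₀)` in a set of volume at
most `|B_s|`, `s = min(r, 2r₀)`. If `ν ≥ 0` the weight is at most `(2r₀)^ν` there; if `ν < 0` the
weight integral over such a set is at most the one over `B(a,s)`, which polar coordinates give as
`d|B₁|/(d+ν) · s^(d+ν)`, plus `s^ν |B_s|`. As `0 ≤ λ ≤ 1` and `e ≥ 0`, the factor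
`|B(x,r)|^(-λ) ≤ |B_s|^(-λ)` then leaves at most a constant times `(2r₀)^e` in both cases.
-/

theorem measureReal_ball_pos {X : Type*} [PseudoMetricSpace X] [ProperSpace X]
    [MeasurableSpace X] (μ : Measure X) [μ.IsOpenPosMeasure] [IsFiniteMeasureOnCompacts μ]
    (x : X) {r : ℝ} (hr : 0 < r) : 0 < μ.real (ball x r) :=
  ENNReal.toReal_pos (measure_ball_pos μ x hr).ne' measure_ball_lt_top.ne

theorem two_rpow_neg_abs_mul_rpow_le {r t : ℝ} (ν : ℝ) (hr : 0 < r) (h₁ : r / 2 ≤ t)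
    (h₂ : t ≤ 2 * r) : 2 ^ (-|ν|) * r ^ ν ≤ t ^ ν := by
  rcases le_or_gt 0 ν with hν | hν
  · rw [abs_of_nonneg hν, Real.rpow_neg zero_le_two, inv_mul_eq_div,
      ← Real.div_rpow hr.le zero_le_two]
    exact Real.rpow_le_rpow (by positivity) h₁ hν
  · rw [abs_of_neg hν, neg_neg, ← Real.mul_rpow zero_le_two hr.le]
    exact Real.rpow_le_rpow_of_nonpos ((half_pos hr).trans_le h₁) h₂ hν.le

theorem setLIntegral_norm_sub_rpow_le_of_nonneg {α : Type*} [SeminormedAddCommGroup α]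
    [MeasurableSpace α] (μ : Measure α) {ν : ℝ} (hν : 0 ≤ ν) {S : Set α} {a : α} {R : ℝ}
    (hS : S ⊆ ball a R) :
    ∫⁻ y in S, ENNReal.ofReal (‖y - a‖ ^ ν) ∂μ ≤ ENNReal.ofReal (R ^ ν) * μ S :=
  (setLIntegral_mono measurable_const fun y hy => ENNReal.ofReal_le_ofReal <|
    Real.rpow_le_rpow (norm_nonneg _) (by simpa [dist_eq_norm] using (mem_ball.1 (hS hy)).le)
      hν).trans_eq (setLIntegral_const _ _)

theorem integral_Ioi_pow_pred_smul_indicator_Iio_rpow {d : ℕ} (hd : 0 < d) {ν : ℝ}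
    (hν : -(d : ℝ) < ν) {R : ℝ} (hR : 0 ≤ R) :
    ∫ t in Ioi (0 : ℝ), t ^ (d - 1) • (Iio R).indicator (· ^ ν) t = R ^ ((d : ℝ) + ν) / (d + ν) :=
  calc ∫ t in Ioi (0 : ℝ), t ^ (d - 1) • (Iio R).indicator (· ^ ν) t
      = ∫ t in Ioi (0 : ℝ), (Iio R).indicator (· ^ ((d : ℝ) + ν - 1)) t := by
        refine setIntegral_congr_fun measurableSet_Ioi fun t (ht : 0 < t) => ?_
        by_cases htR : t < R
        · simp only [indicator_of_mem (show t ∈ Iio R from htR), smul_eq_mul]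
          rw [← Real.rpow_natCast, ← Real.rpow_add ht, Nat.cast_sub hd]
          ring_nf
        · simp [htR]
    _ = ∫ t in (0 : ℝ)..R, t ^ ((d : ℝ) + ν - 1) := by
        rw [setIntegral_indicator measurableSet_Iio, Ioi_inter_Iio,
          ← integral_Ioc_eq_integral_Ioo, intervalIntegral.integral_of_le hR]
    _ = R ^ ((d : ℝ) + ν) / (d + ν) := by
        rw [integral_rpow (Or.inl (by linarith)), Real.zero_rpow (by linarith)]
        ring_nf

theorem measure_le_measure_ball_min {E : Type*} [NormedAddCommGroup E] [MeasurableSpace E]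
    [BorelSpace E] (μ : Measure E) [μ.IsAddHaarMeasure] {T : Set E} {x a : E} {r R : ℝ}
    (hx : T ⊆ ball x r) (ha : T ⊆ ball a R) : μ T ≤ μ (ball a (min r R)) := by
  rcases le_total r R with h | h
  · rw [min_eq_left h, Measure.addHaar_ball_center, ← Measure.addHaar_ball_center μ x]
    exact measure_mono hx
  · rw [min_eq_right h]
    exact measure_mono ha

section AddHaar

variable {E : Type*} [NormedAddCommGroup E] [NormedSpace ℝ E] [FiniteDimensional ℝ E]
  [Nontrivial E] [MeasurableSpace E] [BorelSpace E] (μ : Measure E) [μ.IsAddHaarMeasure]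

theorem addHaar_ball_eq_ofReal (x : E) {r : ℝ} (hr : 0 ≤ r) :
    μ (ball x r) = ENNReal.ofReal (μ.real (ball 0 1) * r ^ finrank ℝ E) := by
  rw [Measure.addHaar_ball μ x hr, ENNReal.ofReal_mul measureReal_nonneg,
    ofReal_measureReal measure_ball_lt_top.ne, mul_comm]

theorem lintegral_ball_norm_sub_rpow {ν : ℝ} (hν : -(finrank ℝ E : ℝ) < ν) (a : E) {R : ℝ}
    (hR : 0 ≤ R) :
    ∫⁻ y in ball a R, ENNReal.ofReal (‖y - a‖ ^ ν) ∂μ =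
      ENNReal.ofReal (finrank ℝ E * μ.real (ball 0 1) / (finrank ℝ E + ν) *
        R ^ ((finrank ℝ E : ℝ) + ν)) := by
  set g : ℝ → ℝ := (Iio R).indicator (· ^ ν)
  have hg_nonneg : ∀ t, 0 ≤ t → 0 ≤ g t := fun t ht =>
    indicator_nonneg (fun t _ => Real.rpow_nonneg ht _) t
  have hint : Integrable (fun y : E => g ‖y‖) μ := by
    have := integrableOn_ball_of_norm_le_rpow (μ := μ) (f := fun y : E => ‖y‖ ^ ν) (C := 1)
      (α := -ν) (r := R) finrank_pos (by linarith)
      (ae_of_all _ fun y => by simp [abs_of_nonneg (Real.rpow_nonneg (norm_nonneg y) ν)])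
      (measurable_norm.pow_const ν).aestronglyMeasurable
    rw [← integrable_indicator_iff measurableSet_ball] at this
    refine this.congr (ae_of_all _ fun y => ?_)
    by_cases hy : ‖y‖ < R <;> simp [g, hy]
  have hind : ∀ y, (ball a R).indicator (fun y => ENNReal.ofReal (‖y - a‖ ^ ν)) y =
      ENNReal.ofReal (g ‖y - a‖) := by
    intro y
    by_cases hy : ‖y - a‖ < R <;> simp [g, indicator, mem_ball, dist_eq_norm, hy]
  rw [← lintegral_indicator measurableSet_ball, funext hind,
    lintegral_sub_right_eq_self (fun y => ENNReal.ofReal (g ‖y‖)) a,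
    ← ofReal_integral_eq_lintegral_ofReal hint (ae_of_all _ fun y => hg_nonneg _ (norm_nonneg y)),
    integral_fun_norm_addHaar, integral_Ioi_pow_pred_smul_indicator_Iio_rpow finrank_pos hν hR]
  simp only [nsmul_eq_mul, smul_eq_mul]
  ring_nf

theorem setLIntegral_norm_sub_rpow_le_of_nonpos {ν : ℝ} (hν : -(finrank ℝ E : ℝ) < ν)
    (hν0 : ν ≤ 0) {S : Set E} {a : E} {s : ℝ} (hs : 0 < s) (hS : μ S ≤ μ (ball a s)) :
    ∫⁻ y in S, ENNReal.ofReal (‖y - a‖ ^ ν) ∂μ ≤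
      ENNReal.ofReal ((finrank ℝ E * μ.real (ball 0 1) / (finrank ℝ E + ν) + μ.real (ball 0 1)) *
        s ^ ((finrank ℝ E : ℝ) + ν)) := by
  have hfar : ∫⁻ y in S \ ball a s, ENNReal.ofReal (‖y - a‖ ^ ν) ∂μ ≤
      ENNReal.ofReal (s ^ ν) * μ (ball a s) :=
    calc ∫⁻ y in S \ ball a s, ENNReal.ofReal (‖y - a‖ ^ ν) ∂μ
        ≤ ∫⁻ _ in S \ ball a s, ENNReal.ofReal (s ^ ν) ∂μ :=
          setLIntegral_mono measurable_const fun y hy => ENNReal.ofReal_le_ofReal <|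
            Real.rpow_le_rpow_of_nonpos hs (by simpa [dist_eq_norm] using hy.2) hν0
      _ = ENNReal.ofReal (s ^ ν) * μ (S \ ball a s) := setLIntegral_const _ _
      _ ≤ ENNReal.ofReal (s ^ ν) * μ (ball a s) :=
          mul_le_mul_right ((measure_mono sdiff_subset).trans hS) _
  rw [← lintegral_inter_add_sdiff _ S measurableSet_ball]
  calc _ ≤ ∫⁻ y in ball a s, ENNReal.ofReal (‖y - a‖ ^ ν) ∂μ +
        ENNReal.ofReal (s ^ ν) * μ (ball a s) :=
        add_le_add (lintegral_mono_set inter_subset_right) hfar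
    _ = _ := by
        have hv := measureReal_ball_pos μ 0 one_pos
        have hdν : 0 < (finrank ℝ E : ℝ) + ν := by linarith
        rw [lintegral_ball_norm_sub_rpow μ hν a hs.le, addHaar_ball_eq_ofReal μ a hs.le,
          ← ENNReal.ofReal_mul (by positivity), ← ENNReal.ofReal_add (by positivity)
            (by positivity), Real.rpow_add hs, Real.rpow_natCast]
        ring_nf

theorem addHaar_ball_rpow_eq_ofReal (x : E) {s : ℝ} (hs : 0 < s) (α : ℝ) :
    μ (ball x s) ^ α = ENNReal.ofReal (μ.real (ball 0 1) ^ α * s ^ (finrank ℝ E * α)) := by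
  rw [addHaar_ball_eq_ofReal μ x hs.le,
    ENNReal.ofReal_rpow_of_pos (mul_pos (measureReal_ball_pos μ 0 one_pos) (by positivity)),
    Real.mul_rpow measureReal_nonneg (by positivity), Real.rpow_natCast_mul hs.le]

theorem measure_ball_rpow_mul_setLIntegral_le_of_nonneg {lam ν : ℝ} (hlam1 : lam ≤ 1)
    (hν : 0 ≤ ν) {T : Set E} {a : E} {s R : ℝ} (hs : 0 < s) (hsR : s ≤ R) (hTR : T ⊆ ball a R)
    (hT : μ T ≤ μ (ball a s)) :
    μ (ball a s) ^ (-lam) * ∫⁻ y in T, ENNReal.ofReal (‖y - a‖ ^ ν) ∂μ ≤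
      ENNReal.ofReal (μ.real (ball 0 1) ^ (1 - lam) *
        R ^ ((finrank ℝ E : ℝ) + ν - finrank ℝ E * lam)) := by
  set v := μ.real (ball (0 : E) 1)
  have hv : 0 < v := measureReal_ball_pos μ 0 one_pos
  have hR : 0 < R := hs.trans_le hsR
  have hexp : 0 ≤ (finrank ℝ E : ℝ) * (1 - lam) := by
    have := sub_nonneg.2 hlam1
    positivity
  calc μ (ball a s) ^ (-lam) * ∫⁻ y in T, ENNReal.ofReal (‖y - a‖ ^ ν) ∂μ
      ≤ μ (ball a s) ^ (-lam) * (ENNReal.ofReal (R ^ ν) * μ (ball a s)) :=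
        mul_le_mul_right ((setLIntegral_norm_sub_rpow_le_of_nonneg μ hν hTR).trans
          (mul_le_mul_right hT _)) _
    _ = ENNReal.ofReal (v ^ (-lam) * s ^ (finrank ℝ E * -lam) *
          (R ^ ν * (v * s ^ finrank ℝ E))) := by
        rw [addHaar_ball_rpow_eq_ofReal μ a hs, addHaar_ball_eq_ofReal μ a hs.le,
          ← ENNReal.ofReal_mul (by positivity), ← ENNReal.ofReal_mul (by positivity)]
    _ ≤ _ := by
        refine ENNReal.ofReal_le_ofReal ?_
        calc v ^ (-lam) * s ^ (finrank ℝ E * -lam) * (R ^ ν * (v * s ^ finrank ℝ E))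
            = v ^ (1 - lam) * (s ^ (finrank ℝ E * (1 - lam)) * R ^ ν) := by
              rw [sub_eq_neg_add, Real.rpow_add_one hv.ne', mul_add, mul_one, Real.rpow_add hs,
                Real.rpow_natCast]
              ring
          _ ≤ v ^ (1 - lam) * (R ^ (finrank ℝ E * (1 - lam)) * R ^ ν) := by gcongr
          _ = v ^ (1 - lam) * R ^ ((finrank ℝ E : ℝ) + ν - finrank ℝ E * lam) := by
              rw [← Real.rpow_add hR]
              ring_nf

theorem measure_ball_rpow_mul_setLIntegral_le_of_nonpos {lam ν : ℝ}
    (hν : -(finrank ℝ E : ℝ) < ν) (hν0 : ν ≤ 0)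
    (he : 0 ≤ (finrank ℝ E : ℝ) + ν - finrank ℝ E * lam) {T : Set E} {a : E} {s R : ℝ}
    (hs : 0 < s) (hsR : s ≤ R) (hT : μ T ≤ μ (ball a s)) :
    μ (ball a s) ^ (-lam) * ∫⁻ y in T, ENNReal.ofReal (‖y - a‖ ^ ν) ∂μ ≤
      ENNReal.ofReal ((finrank ℝ E * μ.real (ball 0 1) / (finrank ℝ E + ν) + μ.real (ball 0 1)) *
        μ.real (ball 0 1) ^ (-lam) * R ^ ((finrank ℝ E : ℝ) + ν - finrank ℝ E * lam)) := by
  set C := finrank ℝ E * μ.real (ball 0 1) / (finrank ℝ E + ν) + μ.real (ball 0 1)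
  have hv := measureReal_ball_pos μ (0 : E) one_pos
  have hC : 0 < C := by
    have : 0 < (finrank ℝ E : ℝ) + ν := by linarith
    positivity
  calc μ (ball a s) ^ (-lam) * ∫⁻ y in T, ENNReal.ofReal (‖y - a‖ ^ ν) ∂μ
      ≤ μ (ball a s) ^ (-lam) * ENNReal.ofReal (C * s ^ ((finrank ℝ E : ℝ) + ν)) :=
        mul_le_mul_right (setLIntegral_norm_sub_rpow_le_of_nonpos μ hν hν0 hs hT) _
    _ = ENNReal.ofReal (C * μ.real (ball 0 1) ^ (-lam) *
          s ^ ((finrank ℝ E : ℝ) + ν - finrank ℝ E * lam)) := by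
        rw [addHaar_ball_rpow_eq_ofReal μ a hs, ← ENNReal.ofReal_mul (by positivity),
          show (finrank ℝ E : ℝ) + ν - finrank ℝ E * lam = finrank ℝ E * -lam + (finrank ℝ E + ν)
            by ring, Real.rpow_add hs (finrank ℝ E * -lam)]
        ring_nf
    _ ≤ _ := by gcongr

theorem exists_measure_ball_rpow_mul_setLIntegral_inter_le {lam ν : ℝ} (hlam0 : 0 ≤ lam)
    (hlam1 : lam ≤ 1) (hν : -(finrank ℝ E : ℝ) < ν)
    (hν' : (finrank ℝ E : ℝ) * lam - finrank ℝ E ≤ ν) :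
    ∃ K : ℝ, 0 < K ∧ ∀ (x₀ a : E) (r₀ : ℝ), a ∈ ball x₀ r₀ → ∀ (x : E) (r : ℝ), 0 < r →
      μ (ball x r) ^ (-lam) * ∫⁻ y in ball x r ∩ ball x₀ r₀, ENNReal.ofReal (‖y - a‖ ^ ν) ∂μ ≤
        ENNReal.ofReal (K * r₀ ^ ((finrank ℝ E : ℝ) + ν - finrank ℝ E * lam)) := by
  set v := μ.real (ball (0 : E) 1)
  have hv : 0 < v := measureReal_ball_pos μ 0 one_pos
  set C := finrank ℝ E * v / (finrank ℝ E + ν) + v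
  set e := (finrank ℝ E : ℝ) + ν - finrank ℝ E * lam
  have he : 0 ≤ e := by linarith
  set M := max (v ^ (1 - lam)) (C * v ^ (-lam))
  refine ⟨2 ^ e * M, by positivity, fun x₀ a r₀ ha x r hr => ?_⟩
  have hr₀ : 0 < r₀ := pos_of_mem_ball ha
  have hM : ∀ B ≤ M, ENNReal.ofReal (B * (2 * r₀) ^ e) ≤ ENNReal.ofReal (2 ^ e * M * r₀ ^ e) := by
    intro B hB
    rw [Real.mul_rpow zero_le_two hr₀.le, mul_right_comm _ M, mul_comm _ M]
    exact ENNReal.ofReal_le_ofReal (mul_le_mul_of_nonneg_right hB (by positivity))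
  set s := min r (2 * r₀)
  have hs : 0 < s := lt_min hr (by positivity)
  have hball : ball x₀ r₀ ⊆ ball a (2 * r₀) :=
    ball_subset_ball' (by rw [dist_comm]; linarith [mem_ball.1 ha])
  have hT : μ (ball x r ∩ ball x₀ r₀) ≤ μ (ball a s) :=
    measure_le_measure_ball_min μ inter_subset_left (inter_subset_right.trans hball)
  have hvol : μ (ball x r) ^ (-lam) ≤ μ (ball a s) ^ (-lam) := by
    rw [ENNReal.rpow_neg, ENNReal.rpow_neg, Measure.addHaar_ball_center μ x,
      ← Measure.addHaar_ball_center μ a]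
    exact ENNReal.inv_le_inv.2 (ENNReal.rpow_le_rpow
      (measure_mono (μ := μ) (ball_subset_ball (x := a) (min_le_left _ _))) hlam0)
  refine (mul_le_mul_left hvol _).trans ?_
  rcases le_or_gt 0 ν with hν0 | hν0
  · exact (measure_ball_rpow_mul_setLIntegral_le_of_nonneg μ hlam1 hν0 hs (min_le_right _ _)
      (inter_subset_right.trans hball) hT).trans (hM _ (le_max_left _ _))
  · exact (measure_ball_rpow_mul_setLIntegral_le_of_nonpos μ hν hν0.le he hs (min_le_right _ _)
      hT).trans (hM _ (le_max_right _ _))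

theorem measure_ball_div_two_le_measure_ball_sdiff_ball_half (x a : E) {r : ℝ} (hr : 0 < r) :
    μ (ball x r) / 2 ≤ μ (ball x r \ ball a (r / 2)) := by
  refine le_trans ?_ le_measure_sdiff
  have hv := measureReal_ball_pos μ (0 : E) one_pos
  rw [addHaar_ball_eq_ofReal μ x hr.le, addHaar_ball_eq_ofReal μ a (by positivity),
    ← ENNReal.ofReal_ofNat 2, ← ENNReal.ofReal_div_of_pos two_pos,
    ← ENNReal.ofReal_sub _ (by positivity)]
  refine ENNReal.ofReal_le_ofReal ?_
  have h2 : (2 : ℝ) ≤ 2 ^ finrank ℝ E := le_self_pow₀ one_le_two finrank_pos.ne'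
  have : (r / 2) ^ finrank ℝ E ≤ r ^ finrank ℝ E / 2 := by
    rw [div_pow]
    exact div_le_div_of_nonneg_left (by positivity) zero_lt_two h2
  nlinarith

theorem exists_le_measure_ball_rpow_mul_setLIntegral (lam ν : ℝ) :
    ∃ c : ℝ, 0 < c ∧ ∀ (x₀ a : E) (r₀ : ℝ), a ∈ ball x₀ r₀ →
      ENNReal.ofReal (c * r₀ ^ ((finrank ℝ E : ℝ) + ν - finrank ℝ E * lam)) ≤
        μ (ball x₀ r₀) ^ (-lam) * ∫⁻ y in ball x₀ r₀, ENNReal.ofReal (‖y - a‖ ^ ν) ∂μ := by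
  set v := μ.real (ball (0 : E) 1)
  have hv : 0 < v := measureReal_ball_pos μ 0 one_pos
  refine ⟨2 ^ (-|ν|) * v ^ (1 - lam) / 2, by positivity, fun x₀ a r₀ ha => ?_⟩
  have hr₀ : 0 < r₀ := pos_of_mem_ball ha
  set S := ball x₀ r₀ \ ball a (r₀ / 2)
  have hS := measure_ball_div_two_le_measure_ball_sdiff_ball_half μ x₀ a hr₀
  rw [addHaar_ball_eq_ofReal μ x₀ hr₀.le, ← ENNReal.ofReal_ofNat 2,
    ← ENNReal.ofReal_div_of_pos two_pos] at hS
  have hI : ENNReal.ofReal (2 ^ (-|ν|) * r₀ ^ ν) * μ S ≤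
      ∫⁻ y in ball x₀ r₀, ENNReal.ofReal (‖y - a‖ ^ ν) ∂μ :=
    calc ENNReal.ofReal (2 ^ (-|ν|) * r₀ ^ ν) * μ S
        = ∫⁻ _ in S, ENNReal.ofReal (2 ^ (-|ν|) * r₀ ^ ν) ∂μ := (setLIntegral_const _ _).symm
      _ ≤ ∫⁻ y in S, ENNReal.ofReal (‖y - a‖ ^ ν) ∂μ := by
          refine setLIntegral_mono' (measurableSet_ball.diff measurableSet_ball) fun y hy => ?_
          refine ENNReal.ofReal_le_ofReal (two_rpow_neg_abs_mul_rpow_le ν hr₀ ?_ ?_)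
          · simpa [dist_eq_norm] using hy.2
          · rw [← dist_eq_norm]
            linarith [dist_triangle_right y a x₀, mem_ball.1 hy.1, mem_ball.1 ha]
      _ ≤ ∫⁻ y in ball x₀ r₀, ENNReal.ofReal (‖y - a‖ ^ ν) ∂μ := lintegral_mono_set sdiff_subset
  rw [addHaar_ball_rpow_eq_ofReal μ x₀ hr₀]
  refine le_trans ?_ (mul_le_mul_right ((mul_le_mul_right hS _).trans hI) _)
  rw [← ENNReal.ofReal_mul (by positivity), ← ENNReal.ofReal_mul (by positivity)]
  refine ENNReal.ofReal_le_ofReal (le_of_eq ?_)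
  rw [show (finrank ℝ E : ℝ) + ν - finrank ℝ E * lam = finrank ℝ E * -lam + ν + finrank ℝ E by ring,
    Real.rpow_add hr₀, Real.rpow_add hr₀, Real.rpow_natCast, sub_eq_neg_add,
    Real.rpow_add_one hv.ne']
  ring

end AddHaar

theorem setLIntegral_abs_indicator_one_rpow_mul {α : Type*} [MeasurableSpace α] (μ : Measure α)
    {p : ℝ} (hp : 0 < p) {s : Set α} (hs : MeasurableSet s) (U : Set α) (w : α → ℝ) :
    ∫⁻ y in U, ENNReal.ofReal (|s.indicator 1 y| ^ p * w y) ∂μ =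
      ∫⁻ y in U ∩ s, ENNReal.ofReal (w y) ∂μ := by
  have h : ∀ y, ENNReal.ofReal (|s.indicator 1 y| ^ p * w y) =
      s.indicator (fun y => ENNReal.ofReal (w y)) y := by
    intro y
    by_cases hy : y ∈ s <;> simp [hy, Real.zero_rpow hp.ne']
  rw [funext h, lintegral_indicator hs, Measure.restrict_restrict hs, inter_comm]

theorem ENNReal.ofReal_mul_rpow_rpow_one_div {K t e p : ℝ} (hK : 0 ≤ K) (ht : 0 ≤ t)
    (hp : 0 < p) :
    ENNReal.ofReal (K * t ^ e) ^ (1 / p) = ENNReal.ofReal (K ^ (1 / p) * t ^ (e / p)) := by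
  rw [ENNReal.ofReal_rpow_of_nonneg (by positivity) (by positivity),
    Real.mul_rpow hK (by positivity), ← Real.rpow_mul ht, mul_one_div]

section Morrey

variable {n : ℕ} {p lam : ℝ} {w f : EuclideanSpace ℝ (Fin n) → ℝ}

theorem morreyNorm_le_of_forall_le (hp : 0 < p) {M : ℝ≥0∞}
    (h : ∀ x r, 0 < r → volume (ball x r) ^ (-lam) *
      ∫⁻ y in ball x r, ENNReal.ofReal (|f y| ^ p * w y) ≤ M) :
    morreyNorm p lam w f ≤ M ^ (1 / p) :=
  iSup₂_le fun x r => iSup_le fun hr => ENNReal.rpow_le_rpow (h x r hr) (by positivity)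

theorem le_morreyNorm (x : EuclideanSpace ℝ (Fin n)) {r : ℝ} (hr : 0 < r) :
    (volume (ball x r) ^ (-lam) * ∫⁻ y in ball x r, ENNReal.ofReal (|f y| ^ p * w y)) ^ (1 / p) ≤
      morreyNorm p lam w f :=
  le_iSup₂_of_le x r (le_iSup_of_le hr le_rfl)

end Morrey

/-- Remark 4.4 (norm estimate): for `w(y) = |y-a|^ν` with `ν > -n`, `ν ≥ nλ - n` and
`a ∈ B(x₀,r₀)`, one has `‖χ_{B(x₀,r₀)}‖_{p,λ;w} ≍ r₀^{(n+ν-nλ)/p}`, with constants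
depending only on `n, p, λ, ν`. -/
theorem stmt13 (n : ℕ) (hn : 1 ≤ n) (p lam : ℝ) (hp : 1 ≤ p)
    (hlam0 : 0 ≤ lam) (hlam1 : lam ≤ 1)
    (ν : ℝ) (hν : -(n : ℝ) < ν) (hν' : (n : ℝ) * lam - n ≤ ν) :
    ∃ c₁ c₂ : ℝ, 0 < c₁ ∧ 0 < c₂ ∧
      ∀ (x₀ a : EuclideanSpace ℝ (Fin n)) (r₀ : ℝ), 0 < r₀ → a ∈ Metric.ball x₀ r₀ →
        ENNReal.ofReal (c₁ * r₀ ^ (((n : ℝ) + ν - n * lam) / p)) ≤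
          morreyNorm p lam (fun y => ‖y - a‖ ^ ν) ((Metric.ball x₀ r₀).indicator 1) ∧
        morreyNorm p lam (fun y => ‖y - a‖ ^ ν) ((Metric.ball x₀ r₀).indicator 1) ≤
          ENNReal.ofReal (c₂ * r₀ ^ (((n : ℝ) + ν - n * lam) / p)) := by
  have : Nonempty (Fin n) := ⟨⟨0, hn⟩⟩
  have hp0 : 0 < p := by linarith
  have hd : finrank ℝ (EuclideanSpace ℝ (Fin n)) = n := finrank_euclideanSpace_fin
  obtain ⟨c, hc, hlow⟩ := exists_le_measure_ball_rpow_mul_setLIntegral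
    (volume : Measure (EuclideanSpace ℝ (Fin n))) lam ν
  obtain ⟨K, hK, hup⟩ := exists_measure_ball_rpow_mul_setLIntegral_inter_le
    (volume : Measure (EuclideanSpace ℝ (Fin n))) hlam0 hlam1 (by rwa [hd]) (by rwa [hd])
  rw [hd] at hlow hup
  refine ⟨c ^ (1 / p), K ^ (1 / p), by positivity, by positivity, fun x₀ a r₀ hr₀ ha => ⟨?_, ?_⟩⟩
  · rw [← ENNReal.ofReal_mul_rpow_rpow_one_div hc.le hr₀.le hp0]
    refine le_trans ?_ (le_morreyNorm x₀ hr₀)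
    rw [setLIntegral_abs_indicator_one_rpow_mul volume hp0 measurableSet_ball, inter_self]
    exact ENNReal.rpow_le_rpow (hlow x₀ a r₀ ha) (by positivity)
  · rw [← ENNReal.ofReal_mul_rpow_rpow_one_div hK.le hr₀.le hp0]
    refine morreyNorm_le_of_forall_le hp0 fun x r hr => ?_
    rw [setLIntegral_abs_indicator_one_rpow_mul volume hp0 measurableSet_ball]
    exact hup x₀ a r₀ ha x r hr
end
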